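/- For ribbon graphs P and Q, the Euler genus of the partial dual of a 1-sum is additive: γ((P ⊕ Q)^{E(Q)}) = γ((P ⊕ Q)^{E(P)}) = γ(P) + γ(Q). -/
import Mathlib


/-!
A combinatorial model of ribbon graphs (cellularly embedded graphs), following
the flag / three-involution (graph-encoded map) presentation.  A ribbon graph
consists of a finite set of flags `flags` inside an ambient type `F`, a finite
set `fverts` of tokens representing isolated (bare) vertices, and three
involutions `s0, s1, s2` of `F` supported on `flags`, with `s0` and `s2`
commuting.  Vertices correspond to orbits of `⟨s1, s2⟩` on flags (plus the bare
vertices), edges to orbits of `⟨s0, s2⟩`, and boundary components to orbits of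
`⟨s0, s1⟩`.  Chmutov's partial dual with respect to an edge subset `A` swaps
the roles of `s0` and `s2` on the flags of `A`.
-/

namespace RibbonPaper

open Function

variable {F : Type*} [DecidableEq F] [Fintype F]

structure RibbonGraph (F : Type*) [DecidableEq F] [Fintype F] where
  flags : Finset F
  fverts : Finset F
  disj : ∀ x ∈ fverts, x ∉ flags
  s0 : Equiv.Perm F
  s1 : Equiv.Perm F
  s2 : Equiv.Perm F
  fix0 : ∀ x ∉ flags, s0 x = x
  fix1 : ∀ x ∉ flags, s1 x = x
  fix2 : ∀ x ∉ flags, s2 x = x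
  inv0 : ∀ x, s0 (s0 x) = x
  inv1 : ∀ x, s1 (s1 x) = x
  inv2 : ∀ x, s2 (s2 x) = x
  comm02 : ∀ x, s0 (s2 x) = s2 (s0 x)

namespace RibbonGraph

attribute [local instance] Classical.propDecidable

/-- An involution supported on `S` preserves `S`. -/
lemma perm_mem_of {p : Equiv.Perm F} {S : Finset F}
    (hfix : ∀ x ∉ S, p x = x) (hinv : ∀ x, p (p x) = x)
    {x : F} (hx : x ∈ S) : p x ∈ S := by
  by_contra hc
  have h1 : p (p x) = p x := hfix _ hc
  rw [hinv x] at h1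
  exact hc (h1 ▸ hx)

/-- The function acting as `v` on `A` and as `u` off `A`. -/
def mixFun (u v : Equiv.Perm F) (A : Finset F) : F → F :=
  fun x => if x ∈ A then v x else u x

lemma involutive_mixFun {u v : Equiv.Perm F} {A : Finset F}
    (hu : ∀ x, u (u x) = x) (hv : ∀ x, v (v x) = x)
    (hA : ∀ x ∈ A, u x ∈ A ∧ v x ∈ A) :
    Function.Involutive (mixFun u v A) := by
  intro x
  by_cases hx : x ∈ A
  · have h1 : v x ∈ A := (hA x hx).2
    simp only [mixFun, if_pos hx, if_pos h1]
    exact hv x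
  · have h1 : u x ∉ A := by
      intro hc
      have h2 : u (u x) ∈ A := (hA _ hc).1
      rw [hu x] at h2
      exact hx h2
    simp only [mixFun, if_neg hx, if_neg h1]
    exact hu x

/-- The permutation acting as `v` on `A` and as `u` off `A` (junk value `u`
if this fails to be an involution). -/
noncomputable def mix (u v : Equiv.Perm F) (A : Finset F) : Equiv.Perm F :=
  if h : Function.Involutive (mixFun u v A) then Function.Involutive.toPerm _ h else u

lemma mix_apply {u v : Equiv.Perm F} {A : Finset F}
    (h : Function.Involutive (mixFun u v A)) (x : F) :
    mix u v A x = mixFun u v A x := by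
  simp only [mix, dif_pos h]
  rfl

/-- `A` is (the set of flags of) a subset of the edge set `E(G)`:
it consists of flags and is a union of `⟨s0, s2⟩`-orbits, i.e. of edges. -/
def IsEdgeSubset (G : RibbonGraph F) (A : Finset F) : Prop :=
  A ⊆ G.flags ∧ ∀ x ∈ A, G.s0 x ∈ A ∧ G.s2 x ∈ A

/-- The partial dual `G^A` of `G` with respect to the edge subset `A`
(Chmutov): the involutions `s0` and `s2` are interchanged on the flags of the
edges of `A`.  (Junk value `G` if `A` is not a union of edges.) -/
noncomputable def partialDual (G : RibbonGraph F) (A : Finset F) : RibbonGraph F :=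
  if h : G.IsEdgeSubset A then
    have h02 : Function.Involutive (mixFun G.s0 G.s2 A) :=
      involutive_mixFun G.inv0 G.inv2 h.2
    have h20 : Function.Involutive (mixFun G.s2 G.s0 A) :=
      involutive_mixFun G.inv2 G.inv0 (fun x hx => ⟨(h.2 x hx).2, (h.2 x hx).1⟩)
    { flags := G.flags
      fverts := G.fverts
      disj := G.disj
      s0 := mix G.s0 G.s2 A
      s1 := G.s1
      s2 := mix G.s2 G.s0 A
      fix0 := by
        intro x hx
        have hxA : x ∉ A := fun hc => hx (h.1 hc)
        rw [mix_apply h02]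
        simp only [mixFun, if_neg hxA]
        exact G.fix0 x hx
      fix1 := G.fix1
      fix2 := by
        intro x hx
        have hxA : x ∉ A := fun hc => hx (h.1 hc)
        rw [mix_apply h20]
        simp only [mixFun, if_neg hxA]
        exact G.fix2 x hx
      inv0 := by
        intro x
        rw [mix_apply h02, mix_apply h02]
        exact h02 x
      inv1 := G.inv1
      inv2 := by
        intro x
        rw [mix_apply h20, mix_apply h20]
        exact h20 x
      comm02 := by
        intro x
        simp only [mix_apply h02, mix_apply h20]
        by_cases hx : x ∈ A
        · have h0 : G.s0 x ∈ A := (h.2 x hx).1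
          have h2 : G.s2 x ∈ A := (h.2 x hx).2
          simp only [mixFun, if_pos hx, if_pos h0, if_pos h2]
          exact (G.comm02 x).symm
        · have h0 : G.s0 x ∉ A := fun hc => hx (by rw [← G.inv0 x]; exact (h.2 _ hc).1)
          have h2 : G.s2 x ∉ A := fun hc => hx (by rw [← G.inv2 x]; exact (h.2 _ hc).2)
          simp only [mixFun, if_neg hx, if_neg h0, if_neg h2]
          exact G.comm02 x }
  else G

/-- The geometric dual `G*`: the roles of `s0` and `s2` (vertices and faces)
are interchanged everywhere. -/
def gdual (G : RibbonGraph F) : RibbonGraph F where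
  flags := G.flags
  fverts := G.fverts
  disj := G.disj
  s0 := G.s2
  s1 := G.s1
  s2 := G.s0
  fix0 := G.fix2
  fix1 := G.fix1
  fix2 := G.fix0
  inv0 := G.inv2
  inv1 := G.inv1
  inv2 := G.inv0
  comm02 := fun x => (G.comm02 x).symm

/-- First return map: the first point of the forward `p`-orbit of `x`
lying in `A` (junk value `x` if there is none). -/
noncomputable def ret (p : Equiv.Perm F) (A : Finset F) (x : F) : F := by
  classical
  exact if h : ∃ k : ℕ, (p ^ k) x ∈ A then (p ^ (Nat.find h)) x else x

/-- The corner pairing of the subgraph induced by the edges of `A`: travel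
around the vertex, skipping flags of deleted edges. -/
noncomputable def indS1fun (G : RibbonGraph F) (A : Finset F) : F → F :=
  fun x => if x ∈ A then ret (G.s1 * G.s2) A (G.s1 x) else x

noncomputable def indS1 (G : RibbonGraph F) (A : Finset F) : Equiv.Perm F :=
  if h : Function.Involutive (indS1fun G A) then Function.Involutive.toPerm _ h else 1

lemma indS1_apply {G : RibbonGraph F} {A : Finset F}
    (h : Function.Involutive (indS1fun G A)) (x : F) :
    indS1 G A x = indS1fun G A x := by
  simp only [indS1, dif_pos h]
  rfl

lemma indS1_apply_junk {G : RibbonGraph F} {A : Finset F}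
    (h : ¬ Function.Involutive (indS1fun G A)) (x : F) :
    indS1 G A x = x := by
  simp only [indS1, dif_neg h]
  rfl

/-- The ribbon subgraph `G|_A` induced by the edge subset `A`: its flags are
those of the edges of `A`, and its vertices are the vertices of `G` incident
with `A`.  (Junk value `G` if `A` is not a union of edges.) -/
noncomputable def induce (G : RibbonGraph F) (A : Finset F) : RibbonGraph F :=
  if h : G.IsEdgeSubset A then
    have h0 : Function.Involutive (mixFun 1 G.s0 A) :=
      involutive_mixFun (fun _ => rfl) G.inv0 (fun x hx => ⟨by simpa using hx, (h.2 x hx).1⟩)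
    have h2 : Function.Involutive (mixFun 1 G.s2 A) :=
      involutive_mixFun (fun _ => rfl) G.inv2 (fun x hx => ⟨by simpa using hx, (h.2 x hx).2⟩)
    { flags := A
      fverts := ∅
      disj := by simp
      s0 := mix 1 G.s0 A
      s1 := indS1 G A
      s2 := mix 1 G.s2 A
      fix0 := by
        intro x hx
        rw [mix_apply h0]
        simp only [mixFun, if_neg hx]
        rfl
      fix1 := by
        intro x hx
        by_cases h' : Function.Involutive (indS1fun G A)
        · rw [indS1_apply h']
          simp only [indS1fun, if_neg hx]
        · exact indS1_apply_junk h' x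
      fix2 := by
        intro x hx
        rw [mix_apply h2]
        simp only [mixFun, if_neg hx]
        rfl
      inv0 := by
        intro x
        rw [mix_apply h0, mix_apply h0]
        exact h0 x
      inv1 := by
        intro x
        by_cases h' : Function.Involutive (indS1fun G A)
        · rw [indS1_apply h', indS1_apply h']
          exact h' x
        · rw [indS1_apply_junk h', indS1_apply_junk h']
      inv2 := by
        intro x
        rw [mix_apply h2, mix_apply h2]
        exact h2 x
      comm02 := by
        intro x
        simp only [mix_apply h0, mix_apply h2]
        by_cases hx : x ∈ A
        · have m0 : G.s0 x ∈ A := (h.2 x hx).1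
          have m2 : G.s2 x ∈ A := (h.2 x hx).2
          simp only [mixFun, if_pos hx, if_pos m0, if_pos m2]
          exact G.comm02 x
        · simp only [mixFun, if_neg hx, Equiv.Perm.one_apply] }
  else G

/-- Two flags are related if some generator maps one to the other. -/
def permRel (gens : Set (Equiv.Perm F)) (a b : F) : Prop := ∃ g ∈ gens, g a = b

/-- The orbit of `x` under the group generated by `gens`. -/
def orbitOf (gens : Set (Equiv.Perm F)) (x : F) : Set F :=
  {y | Relation.EqvGen (permRel gens) x y}

/-- The number of orbits of the group generated by `gens` meeting `S`. -/
noncomputable def countOrbits (gens : Set (Equiv.Perm F)) (S : Set F) : ℕ :=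
  (orbitOf gens '' S).ncard

/-- The number of vertices: orbits of `⟨s1, s2⟩` on the flags, plus bare vertices. -/
noncomputable def numVertices (G : RibbonGraph F) : ℕ :=
  countOrbits {G.s1, G.s2} ↑G.flags + G.fverts.card

/-- The number of edges: orbits of `⟨s0, s2⟩` on the flags. -/
noncomputable def numEdges (G : RibbonGraph F) : ℕ :=
  countOrbits {G.s0, G.s2} ↑G.flags

/-- The number of boundary components: orbits of `⟨s0, s1⟩` on the flags,
plus one for each bare vertex. -/
noncomputable def numBoundary (G : RibbonGraph F) : ℕ :=
  countOrbits {G.s0, G.s1} ↑G.flags + G.fverts.card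

/-- The number of connected components. -/
noncomputable def numComponents (G : RibbonGraph F) : ℕ :=
  countOrbits {G.s0, G.s1, G.s2} ↑G.flags + G.fverts.card

/-- The Euler characteristic `χ(G) = V - E` of the ribbon graph viewed as a
surface with boundary. -/
noncomputable def eulerChar (G : RibbonGraph F) : ℤ :=
  (G.numVertices : ℤ) - (G.numEdges : ℤ)

/-- The Euler genus `γ(G) = 2c(G) - χ(G) - b(G)`, additive over components. -/
noncomputable def eulerGenus (G : RibbonGraph F) : ℤ :=
  2 * (G.numComponents : ℤ) - G.eulerChar - (G.numBoundary : ℤ)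

def Connected (G : RibbonGraph F) : Prop := G.numComponents = 1

/-- `G` is orientable iff its flags admit a proper 2-colouring with respect to
all three involutions. -/
def Orientable (G : RibbonGraph F) : Prop :=
  ∃ f : F → Bool, ∀ x ∈ G.flags,
    f (G.s0 x) ≠ f x ∧ f (G.s1 x) ≠ f x ∧ f (G.s2 x) ≠ f x

/-- A plane ribbon graph: connected with Euler genus `0`. -/
def IsPlane (G : RibbonGraph F) : Prop := G.Connected ∧ G.eulerGenus = 0

/-- An `ℝP²` ribbon graph: connected, non-orientable, Euler genus `1`. -/
def IsRP2 (G : RibbonGraph F) : Prop :=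
  G.Connected ∧ ¬ G.Orientable ∧ G.eulerGenus = 1

noncomputable def toFin (s : Set F) : Finset F := (Set.toFinite s).toFinset

/-- The connected component of `G` containing the flag `x`, as a ribbon graph. -/
noncomputable def componentOf (G : RibbonGraph F) (x : F) : RibbonGraph F :=
  G.induce (toFin (orbitOf {G.s0, G.s1, G.s2} x))

/-- The vertex of `G` containing the flag `x`, as a set of flags. -/
def vertexOrbit (G : RibbonGraph F) (x : F) : Set F := orbitOf {G.s1, G.s2} x

def IsVertexOrbit (G : RibbonGraph F) (v : Set F) : Prop :=
  ∃ x ∈ G.flags, v = G.vertexOrbit x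

/-- `v` is a vertex of `G`: either a `⟨s1,s2⟩`-orbit of flags or a bare vertex. -/
def IsVertex (G : RibbonGraph F) (v : Set F) : Prop :=
  G.IsVertexOrbit v ∨ ∃ t ∈ G.fverts, v = {t}

/-- The vertices of `G` shared by the subgraphs `P` and `Q`. -/
def sharedVerts (G P Q : RibbonGraph F) : Set (Set F) :=
  {v | G.IsVertexOrbit v ∧ (v ∩ ↑P.flags).Nonempty ∧ (v ∩ ↑Q.flags).Nonempty}

/-- `H` is the ribbon subgraph of `G` induced by its edges. -/
def IsRibbonSubgraph (H G : RibbonGraph F) : Prop :=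
  G.IsEdgeSubset H.flags ∧ H = G.induce H.flags

/-- `G = P ⊕ₙ Q` is an `n`-sum: `P` and `Q` are non-trivial connected ribbon
subgraphs with `G = P ∪ Q`, sharing no edges and exactly `n` vertices. -/
def IsNSum (G P Q : RibbonGraph F) (n : ℕ) : Prop :=
  P.IsRibbonSubgraph G ∧ Q.IsRibbonSubgraph G ∧
  P.Connected ∧ Q.Connected ∧ P.flags.Nonempty ∧ Q.flags.Nonempty ∧
  P.flags ∪ Q.flags = G.flags ∧ P.flags ∩ Q.flags = ∅ ∧
  (G.sharedVerts P Q).ncard = n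

/-- `H` is a connected component of `G|_A`. -/
def SideA (G : RibbonGraph F) (A : Finset F) (H : RibbonGraph F) : Prop :=
  ∃ x ∈ A, H = (G.induce A).componentOf x

/-- `H` is a connected component of `G|_{Aᶜ}`. -/
def SideB (G : RibbonGraph F) (A : Finset F) (H : RibbonGraph F) : Prop :=
  SideA G (G.flags \ A) H

/-- `G` is written as the sequence of 1-sums `H 0 ⊕ H 1 ⊕ ⋯ ⊕ H (l-1)`
(partial sums `S`), where the summands are the components of `G|_A` and
`G|_{Aᶜ}`, every flag of `G` is covered, and each 1-sum involves a component
of `G|_A` and a component of `G|_{Aᶜ}`. -/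
def BisepSeq (G : RibbonGraph F) (A : Finset F) (l : ℕ)
    (H S : ℕ → RibbonGraph F) : Prop :=
  0 < l ∧ S 0 = H 0 ∧ S (l - 1) = G ∧
  (∀ i < l, SideA G A (H i) ∨ SideB G A (H i)) ∧
  (∀ x ∈ G.flags, ∃ i < l, x ∈ (H i).flags) ∧
  ∀ i, i + 1 < l →
    IsNSum (S (i + 1)) (S i) (H (i + 1)) 1 ∧
    ∃ j ≤ i, ((SideA G A (H (i + 1)) ∧ SideB G A (H j)) ∨
              (SideB G A (H (i + 1)) ∧ SideA G A (H j))) ∧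
      G.sharedVerts (S i) (H (i + 1)) = G.sharedVerts (H j) (H (i + 1))

/-- `A` defines a biseparation of `G` (Definition 3.2): `A` is trivial, or `G`
is a sequence of 1-sums each involving a component of `G|_A` and one of
`G|_{Aᶜ}`. -/
def DefinesBiseparation (G : RibbonGraph F) (A : Finset F) : Prop :=
  A = G.flags ∨ A = ∅ ∨ ∃ l H S, BisepSeq G A l H S

/-- The component of `G|_A` or of `G|_{Aᶜ}` containing the flag `x`. -/
noncomputable def sideComp (G : RibbonGraph F) (A : Finset F) (x : F) : RibbonGraph F :=
  if x ∈ A then (G.induce A).componentOf x else (G.induce (G.flags \ A)).componentOf x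

/-- `A` defines a plane-biseparation: a biseparation in which every component
of `G|_A` and of `G|_{Aᶜ}` is plane. -/
def PlaneBiseparation (G : RibbonGraph F) (A : Finset F) : Prop :=
  G.DefinesBiseparation A ∧ ∀ x ∈ G.flags, (G.sideComp A x).IsPlane

/-- `A` defines an `ℝP²`-biseparation: a biseparation in which exactly one
component of `G|_A` or of `G|_{Aᶜ}` is an `ℝP²` ribbon graph and all other
components are plane. -/
def RP2Biseparation (G : RibbonGraph F) (A : Finset F) : Prop :=
  G.DefinesBiseparation A ∧
  (∃ x ∈ G.flags, (G.sideComp A x).IsRP2 ∧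
    ∀ y ∈ G.flags, (G.sideComp A y).IsRP2 → G.sideComp A y = G.sideComp A x) ∧
  ∀ y ∈ G.flags, ¬ (G.sideComp A y).IsRP2 → (G.sideComp A y).IsPlane

/-- `G = P ∨ Q` is a join: a 1-sum at a vertex `v` such that the flags of `P`
at `v` form an arc (an interval of the cyclic order around `v`). -/
def IsJoin (G P Q : RibbonGraph F) : Prop :=
  IsNSum G P Q 1 ∧ ∃ v ∈ G.sharedVerts P Q,
    ({x | x ∈ v ∩ ↑P.flags ∧ (G.s2 * G.s1) x ∉ v ∩ ↑P.flags} : Set F).ncard ≤ 1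

/-- `G = H 0 ∨ H 1 ∨ ⋯ ∨ H (l-1)` is a (left-associated) sequence of joins. -/
def JoinSeq (G : RibbonGraph F) (l : ℕ) (H : ℕ → RibbonGraph F) : Prop :=
  0 < l ∧ ∃ S : ℕ → RibbonGraph F, S 0 = H 0 ∧ S (l - 1) = G ∧
    ∀ i, i + 1 < l → IsJoin (S (i + 1)) (S i) (H (i + 1))

/-- `A` defines a join-biseparation of `G`: `G = H_1 ∨ ⋯ ∨ H_l` with `A` the
union of the edge sets of some of the `H_i`. -/
def JoinBiseparation (G : RibbonGraph F) (A : Finset F) : Prop :=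
  ∃ l H, JoinSeq G l H ∧ ∃ I : Set ℕ,
    (↑A : Set F) = ⋃ i ∈ {j | j < l ∧ j ∈ I}, (((H i).flags : Set F))

/-- A join-biseparation in which every join summand is plane. -/
def PlaneJoinBiseparation (G : RibbonGraph F) (A : Finset F) : Prop :=
  ∃ l H, JoinSeq G l H ∧ (∀ i < l, (H i).IsPlane) ∧ ∃ I : Set ℕ,
    (↑A : Set F) = ⋃ i ∈ {j | j < l ∧ j ∈ I}, (((H i).flags : Set F))

/-- A join-biseparation in which exactly one join summand is `ℝP²`
and all the others are plane. -/
def RP2JoinBiseparation (G : RibbonGraph F) (A : Finset F) : Prop :=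
  ∃ l H, JoinSeq G l H ∧
    (∃ i < l, (H i).IsRP2 ∧ ∀ j < l, j ≠ i → (H j).IsPlane) ∧ ∃ I : Set ℕ,
    (↑A : Set F) = ⋃ i ∈ {j | j < l ∧ j ∈ I}, (((H i).flags : Set F))

/-- `G` is prime: it is not a join of two (non-trivial) ribbon graphs. -/
def IsPrime (G : RibbonGraph F) : Prop := ¬ ∃ P Q : RibbonGraph F, IsJoin G P Q

/-- `H` is a join-summand of `G`. -/
def IsJoinSummand (G H : RibbonGraph F) : Prop :=
  ∃ l Hs, JoinSeq G l Hs ∧ ∃ i < l, Hs i = H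

/-- `B` is obtained from `A` by toggling a join-summand of `G`, i.e. by taking
the symmetric difference with the edge set of a join-summand. -/
def ToggleStep (G : RibbonGraph F) (A B : Finset F) : Prop :=
  ∃ H, G.IsJoinSummand H ∧ B = symmDiff A H.flags

/-- The disjoint union of two ribbon graphs on disjoint supports.
(Junk value `P` if the supports are not disjoint.) -/
noncomputable def disjUnion (P Q : RibbonGraph F) : RibbonGraph F :=
  if h : Disjoint (P.flags ∪ P.fverts) (Q.flags ∪ Q.fverts) then
    have hPQ : ∀ x ∈ P.flags, x ∉ Q.flags := fun x hx hc =>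
      (Finset.disjoint_left.mp h (Finset.mem_union_left _ hx)) (Finset.mem_union_left _ hc)
    have key : ∀ (p q : Equiv.Perm F), (∀ x ∉ P.flags, p x = x) → (∀ x, p (p x) = x) →
        (∀ x ∉ Q.flags, q x = x) → (∀ x, q (q x) = x) →
        Function.Involutive (mixFun q p P.flags) := fun p q hp hp2 hq hq2 =>
      involutive_mixFun hq2 hp2 (fun x hx =>
        ⟨by rw [hq x (hPQ x hx)]; exact hx, perm_mem_of hp hp2 hx⟩)
    have h0 : Function.Involutive (mixFun Q.s0 P.s0 P.flags) :=
      key P.s0 Q.s0 P.fix0 P.inv0 Q.fix0 Q.inv0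
    have h1 : Function.Involutive (mixFun Q.s1 P.s1 P.flags) :=
      key P.s1 Q.s1 P.fix1 P.inv1 Q.fix1 Q.inv1
    have h2 : Function.Involutive (mixFun Q.s2 P.s2 P.flags) :=
      key P.s2 Q.s2 P.fix2 P.inv2 Q.fix2 Q.inv2
    { flags := P.flags ∪ Q.flags
      fverts := P.fverts ∪ Q.fverts
      disj := by
        intro x hx hc
        rcases Finset.mem_union.mp hx with hxP | hxQ
        · rcases Finset.mem_union.mp hc with hcP | hcQ
          · exact P.disj x hxP hcP
          · exact (Finset.disjoint_left.mp h (Finset.mem_union_right _ hxP))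
              (Finset.mem_union_left _ hcQ)
        · rcases Finset.mem_union.mp hc with hcP | hcQ
          · exact (Finset.disjoint_left.mp h (Finset.mem_union_left _ hcP))
              (Finset.mem_union_right _ hxQ)
          · exact Q.disj x hxQ hcQ
      s0 := mix Q.s0 P.s0 P.flags
      s1 := mix Q.s1 P.s1 P.flags
      s2 := mix Q.s2 P.s2 P.flags
      fix0 := by
        intro x hx
        have hxP : x ∉ P.flags := fun hc => hx (Finset.mem_union_left _ hc)
        have hxQ : x ∉ Q.flags := fun hc => hx (Finset.mem_union_right _ hc)
        rw [mix_apply h0]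
        simp only [mixFun, if_neg hxP]
        exact Q.fix0 x hxQ
      fix1 := by
        intro x hx
        have hxP : x ∉ P.flags := fun hc => hx (Finset.mem_union_left _ hc)
        have hxQ : x ∉ Q.flags := fun hc => hx (Finset.mem_union_right _ hc)
        rw [mix_apply h1]
        simp only [mixFun, if_neg hxP]
        exact Q.fix1 x hxQ
      fix2 := by
        intro x hx
        have hxP : x ∉ P.flags := fun hc => hx (Finset.mem_union_left _ hc)
        have hxQ : x ∉ Q.flags := fun hc => hx (Finset.mem_union_right _ hc)
        rw [mix_apply h2]
        simp only [mixFun, if_neg hxP]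
        exact Q.fix2 x hxQ
      inv0 := by
        intro x
        rw [mix_apply h0, mix_apply h0]
        exact h0 x
      inv1 := by
        intro x
        rw [mix_apply h1, mix_apply h1]
        exact h1 x
      inv2 := by
        intro x
        rw [mix_apply h2, mix_apply h2]
        exact h2 x
      comm02 := by
        intro x
        simp only [mix_apply h0, mix_apply h2]
        by_cases hx : x ∈ P.flags
        · have m2 : P.s2 x ∈ P.flags := perm_mem_of P.fix2 P.inv2 hx
          have m0 : P.s0 x ∈ P.flags := perm_mem_of P.fix0 P.inv0 hx
          simp only [mixFun, if_pos hx, if_pos m2, if_pos m0]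
          exact P.comm02 x
        · have m2 : Q.s2 x ∉ P.flags := by
            by_cases hq : x ∈ Q.flags
            · intro hc
              exact hPQ _ hc (perm_mem_of Q.fix2 Q.inv2 hq)
            · rw [Q.fix2 x hq]; exact hx
          have m0 : Q.s0 x ∉ P.flags := by
            by_cases hq : x ∈ Q.flags
            · intro hc
              exact hPQ _ hc (perm_mem_of Q.fix0 Q.inv0 hq)
            · rw [Q.fix0 x hq]; exact hx
          simp only [mixFun, if_neg hx, if_neg m2, if_neg m0]
          exact Q.comm02 x }
  else P


/-! ### Auxiliary machinery for Statement 9 -/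

set_option linter.unusedSectionVars false


section Aux

lemma eqvGen_lift {α : Type*} {r s : α → α → Prop}
    (h : ∀ a b, r a b → Relation.EqvGen s a b)
    {a b : α} (hab : Relation.EqvGen r a b) : Relation.EqvGen s a b := by
  induction hab with
  | rel x y hxy => exact h x y hxy
  | refl x => exact Relation.EqvGen.refl x
  | symm x y _ ih => exact Relation.EqvGen.symm _ _ ih
  | trans x y z _ _ ih1 ih2 => exact Relation.EqvGen.trans _ _ _ ih1 ih2

lemma eqvGen_equivalence (gens : Set (Equiv.Perm F)) :
    Equivalence (Relation.EqvGen (permRel gens)) :=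
  Relation.EqvGen.is_equivalence _

lemma mem_orbitOf_self (gens : Set (Equiv.Perm F)) (x : F) : x ∈ orbitOf gens x :=
  Relation.EqvGen.refl x

lemma mem_orbitOf_iff {gens : Set (Equiv.Perm F)} {x y : F} :
    y ∈ orbitOf gens x ↔ Relation.EqvGen (permRel gens) x y := Iff.rfl

lemma orbitOf_eq_iff {gens : Set (Equiv.Perm F)} {x y : F} :
    orbitOf gens x = orbitOf gens y ↔ Relation.EqvGen (permRel gens) x y := by
  constructor
  · intro h
    have : y ∈ orbitOf gens y := mem_orbitOf_self _ _
    rw [← h] at this; exact this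
  · intro h
    ext z
    constructor
    · intro hz; exact (eqvGen_equivalence gens).trans ((eqvGen_equivalence gens).symm h) hz
    · intro hz; exact (eqvGen_equivalence gens).trans h hz

lemma eqvGen_step {gens : Set (Equiv.Perm F)} {g : Equiv.Perm F} (hg : g ∈ gens) (x : F) :
    Relation.EqvGen (permRel gens) x (g x) :=
  Relation.EqvGen.rel _ _ ⟨g, hg, rfl⟩

/-- An orbit of involutions preserving a set `S` stays in `S`. -/
lemma eqvGen_mem_iff {gens : Set (Equiv.Perm F)} {S : Set F}
    (hcl : ∀ g ∈ gens, Function.Involutive g ∧ ∀ z ∈ S, g z ∈ S)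
    {a b : F} (hab : Relation.EqvGen (permRel gens) a b) : a ∈ S ↔ b ∈ S := by
  induction hab with
  | rel x y hxy =>
      obtain ⟨g, hg, rfl⟩ := hxy
      constructor
      · exact fun hx => (hcl g hg).2 x hx
      · intro hy
        have : g (g x) ∈ S := (hcl g hg).2 _ hy
        rwa [(hcl g hg).1 x] at this
  | refl x => exact Iff.rfl
  | symm x y _ ih => exact ih.symm
  | trans x y z _ _ ih1 ih2 => exact ih1.trans ih2

lemma orbitOf_subset {gens : Set (Equiv.Perm F)} {S : Set F}
    (hcl : ∀ g ∈ gens, Function.Involutive g ∧ ∀ z ∈ S, g z ∈ S)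
    {x : F} (hx : x ∈ S) : orbitOf gens x ⊆ S := by
  intro y hy
  exact (eqvGen_mem_iff hcl hy).mp hx

/-- Two functions with the same kernel on `S` have images of the same size. -/
lemma ncard_image_congr {α β : Type*} {S : Set F} {f : F → α} {g : F → β}
    (h : ∀ x ∈ S, ∀ y ∈ S, (f x = f y ↔ g x = g y)) :
    (f '' S).ncard = (g '' S).ncard := by
  classical
  rcases S.eq_empty_or_nonempty with rfl | ⟨x₀, hx₀⟩
  · simp
  · have hφex : ∀ a : α, (∃ x, x ∈ S ∧ f x = a) ∨ ¬(∃ x, x ∈ S ∧ f x = a) := fun a => em _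
    set φ : α → β := fun a => if hc : ∃ x, x ∈ S ∧ f x = a then g hc.choose else g x₀ with hφ
    have hφspec : ∀ x ∈ S, φ (f x) = g x := by
      intro x hx
      have hc : ∃ y, y ∈ S ∧ f y = f x := ⟨x, hx, rfl⟩
      have hcs := hc.choose_spec
      simp only [hφ, dif_pos hc]
      exact (h _ hcs.1 x hx).mp hcs.2
    have h1 : g '' S = φ '' (f '' S) := by
      rw [Set.image_image]
      exact (Set.image_congr fun x hx => (hφspec x hx).symm)
    rw [h1]
    refine (Set.ncard_image_of_injOn ?_).symm
    rintro a ⟨x, hx, rfl⟩ b ⟨y, hy, rfl⟩ hab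
    rw [hφspec x hx, hφspec y hy] at hab
    exact (h x hx y hy).mpr hab

/-! #### First-return map lemmas -/

lemma ret_spec {p : Equiv.Perm F} {A : Finset F} {x : F} (h : ∃ k : ℕ, (p ^ k) x ∈ A) :
    ∃ k : ℕ, ret p A x = (p ^ k) x ∧ (p ^ k) x ∈ A ∧ ∀ j < k, (p ^ j) x ∉ A := by
  unfold ret
  rw [dif_pos h]
  exact ⟨Nat.find h, rfl, Nat.find_spec h, fun j hj => Nat.find_min h hj⟩

lemma ret_eq_of {p : Equiv.Perm F} {A : Finset F} {x : F} {k : ℕ}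
    (hk : (p ^ k) x ∈ A) (hmin : ∀ j < k, (p ^ j) x ∉ A) : ret p A x = (p ^ k) x := by
  obtain ⟨m, hret, hmA, hmmin⟩ := ret_spec ⟨k, hk⟩
  have hmk : m = k := by
    rcases lt_trichotomy m k with h' | h' | h'
    · exact absurd hmA (hmin m h')
    · exact h'
    · exact absurd hk (hmmin k h')
  rw [hret, hmk]

lemma ret_of_mem {p : Equiv.Perm F} {A : Finset F} {x : F} (h : x ∈ A) : ret p A x = x := by
  have h0 : (p ^ 0) x ∈ A := by simpa using h
  have := ret_eq_of h0 (fun j hj => absurd hj (Nat.not_lt_zero j))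
  simpa using this

lemma ret_mem {p : Equiv.Perm F} {A : Finset F} {x : F} (h : ∃ k : ℕ, (p ^ k) x ∈ A) :
    ret p A x ∈ A := by
  obtain ⟨k, hret, hkA, _⟩ := ret_spec h
  rw [hret]; exact hkA

lemma ret_of_not_exists {p : Equiv.Perm F} {A : Finset F} {x : F}
    (h : ¬ ∃ k : ℕ, (p ^ k) x ∈ A) : ret p A x = x := by
  unfold ret
  rw [dif_neg h]

lemma ret_step {p : Equiv.Perm F} {A : Finset F} {x : F} (hx : x ∉ A)
    (h : ∃ k : ℕ, (p ^ k) x ∈ A) : ret p A x = ret p A (p x) := by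
  obtain ⟨k, hret, hkA, hkmin⟩ := ret_spec h
  match k, hret, hkA, hkmin with
  | 0, hret, hkA, _ => exact absurd (by simpa using hkA) hx
  | (j+1), hret, hkA, hkmin =>
      have e1 : ∀ i : ℕ, (p ^ (i+1)) x = (p ^ i) (p x) := by
        intro i
        rw [pow_succ]
        rfl
      have h2 : (p ^ j) (p x) ∈ A := by rw [← e1]; exact hkA
      have h3 : ∀ i < j, (p ^ i) (p x) ∉ A := by
        intro i hi
        rw [← e1]
        exact hkmin (i+1) (by omega)
      rw [hret, ret_eq_of h2 h3, e1]

/-! #### Permutation algebra -/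

lemma conj_pow_invol {s u : Equiv.Perm F} (hs : s * s = 1) (k : ℕ) :
    s * u ^ k = (s * u * s) ^ k * s := by
  induction k with
  | zero => simp
  | succ n ih =>
      rw [pow_succ, ← mul_assoc, ih, pow_succ]
      rw [mul_assoc ((s * u * s) ^ n) (s * u * s) s, mul_assoc (s * u) s s, hs, mul_one,
        mul_assoc]

lemma pow_mul_invpow_ge (g : Equiv.Perm F) {a b : ℕ} (h : b ≤ a) :
    g ^ a * (g⁻¹) ^ b = g ^ (a - b) := by
  have h1 : g ^ a = g ^ (a - b) * g ^ b := by rw [← pow_add, Nat.sub_add_cancel h]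
  rw [inv_pow, h1, mul_assoc, mul_inv_cancel, mul_one]

lemma pow_mul_invpow_le (g : Equiv.Perm F) {a b : ℕ} (h : a ≤ b) :
    g ^ a * (g⁻¹) ^ b = (g⁻¹) ^ (b - a) := by
  have h1 : g ^ b = g ^ (b - a) * g ^ a := by rw [← pow_add, Nat.sub_add_cancel h]
  rw [inv_pow, h1, mul_inv_rev, ← mul_assoc, mul_inv_cancel, one_mul, inv_pow]

lemma invpow_eq_pow (g : Equiv.Perm F) (k : ℕ) :
    ∃ m : ℕ, (g⁻¹) ^ k = g ^ m := by
  refine ⟨k * (orderOf g - 1), ?_⟩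
  have hN : 0 < orderOf g := orderOf_pos g
  have h2 : g ^ k * g ^ (k * (orderOf g - 1)) = 1 := by
    rw [← pow_add]
    have he : k + k * (orderOf g - 1) = k * orderOf g := by
      calc k + k * (orderOf g - 1) = k * ((orderOf g - 1) + 1) := by ring
      _ = k * orderOf g := by rw [Nat.sub_add_cancel hN]
    rw [he, mul_comm, pow_mul, pow_orderOf_eq_one, one_pow]
  rw [inv_pow]
  exact inv_eq_of_mul_eq_one_right h2

end Aux


section Aux2

variable (G : RibbonGraph F)

lemma s1_mul_self : G.s1 * G.s1 = 1 := Equiv.ext fun x => G.inv1 x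
lemma s2_mul_self : G.s2 * G.s2 = 1 := Equiv.ext fun x => G.inv2 x
lemma s1_inv : (G.s1)⁻¹ = G.s1 := inv_eq_of_mul_eq_one_right (s1_mul_self G)
lemma s2_inv : (G.s2)⁻¹ = G.s2 := inv_eq_of_mul_eq_one_right (s2_mul_self G)

lemma p_inv : (G.s1 * G.s2)⁻¹ = G.s2 * G.s1 := by
  rw [mul_inv_rev, s1_inv, s2_inv]

lemma s1_conj_pow (k : ℕ) :
    G.s1 * (G.s1 * G.s2) ^ k = ((G.s1 * G.s2)⁻¹) ^ k * G.s1 := by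
  rw [conj_pow_invol (s1_mul_self G) k]
  congr 2
  exact Equiv.ext fun x => by simp [Equiv.Perm.mul_apply, G.inv1, G.inv2, p_inv, s1_inv, s2_inv]

lemma s2_conj_pow (k : ℕ) :
    G.s2 * (G.s1 * G.s2) ^ k = ((G.s1 * G.s2)⁻¹) ^ k * G.s2 := by
  rw [conj_pow_invol (s2_mul_self G) k]
  congr 2
  exact Equiv.ext fun x => by simp [Equiv.Perm.mul_apply, G.inv1, G.inv2, p_inv, s1_inv, s2_inv]

lemma s1_conj_invpow (k : ℕ) :
    G.s1 * ((G.s1 * G.s2)⁻¹) ^ k = (G.s1 * G.s2) ^ k * G.s1 := by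
  rw [conj_pow_invol (s1_mul_self G) k]
  congr 2
  exact Equiv.ext fun x => by simp [Equiv.Perm.mul_apply, G.inv1, G.inv2, p_inv, s1_inv, s2_inv]

lemma s2_mul_invpow {i : ℕ} (hi : 1 ≤ i) :
    G.s2 * ((G.s1 * G.s2)⁻¹) ^ i = (G.s1 * G.s2) ^ (i - 1) * G.s1 := by
  obtain ⟨j, rfl⟩ : ∃ j, i = j + 1 := ⟨i - 1, by omega⟩
  have h2 : G.s2 * (G.s1 * G.s2)⁻¹ = G.s1 := by
    rw [p_inv, ← mul_assoc, s2_mul_self, one_mul]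
  rw [pow_succ', ← mul_assoc, h2, s1_conj_invpow]
  simp

lemma eqvGen_pow_s1s2 (k : ℕ) (z : F) :
    Relation.EqvGen (permRel {G.s1, G.s2}) z (((G.s1 * G.s2) ^ k) z) := by
  induction k with
  | zero => simpa using Relation.EqvGen.refl z
  | succ n ih =>
      have h1 : ((G.s1 * G.s2) ^ (n+1)) z = G.s1 (G.s2 (((G.s1 * G.s2) ^ n) z)) := by
        rw [pow_succ', Equiv.Perm.mul_apply, Equiv.Perm.mul_apply]
      rw [h1]
      have step2 := eqvGen_step (gens := {G.s1, G.s2}) (g := G.s2) (by simp)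
        (((G.s1 * G.s2) ^ n) z)
      have step1 := eqvGen_step (gens := {G.s1, G.s2}) (g := G.s1) (by simp)
        (G.s2 (((G.s1 * G.s2) ^ n) z))
      exact (eqvGen_equivalence _).trans ih ((eqvGen_equivalence _).trans step2 step1)

/-- If the `⟨s1,s2⟩`-orbit of `x` meets `S` (with `S` closed under `s2`), then the
forward `s1∘s2`-orbit of `x` meets `S`. -/
lemma exists_pow_mem (S : Finset F) (hS2 : ∀ x ∈ S, G.s2 x ∈ S) {x y : F}
    (hxy : Relation.EqvGen (permRel {G.s1, G.s2}) x y) (hy : y ∈ S) :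
    ∃ k : ℕ, ((G.s1 * G.s2) ^ k) x ∈ S := by
  have hcl1 : ∀ z, (∃ k : ℕ, z = ((G.s1*G.s2) ^ k) x ∨ z = ((G.s1*G.s2) ^ k) (G.s2 x)) →
      (∃ k : ℕ, G.s1 z = ((G.s1*G.s2) ^ k) x ∨ G.s1 z = ((G.s1*G.s2) ^ k) (G.s2 x)) := by
    rintro z ⟨k, rfl | rfl⟩
    · obtain ⟨m, hm⟩ := invpow_eq_pow (G.s1*G.s2) k
      refine ⟨m + 1, Or.inr ?_⟩
      have e2 : G.s1 x = (G.s1*G.s2) (G.s2 x) := by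
        rw [Equiv.Perm.mul_apply, G.inv2]
      rw [← Equiv.Perm.mul_apply, s1_conj_pow, hm, Equiv.Perm.mul_apply, e2,
        ← Equiv.Perm.mul_apply, ← pow_succ]
    · obtain ⟨m, hm⟩ := invpow_eq_pow (G.s1*G.s2) k
      refine ⟨m + 1, Or.inl ?_⟩
      have e2 : G.s1 (G.s2 x) = (G.s1*G.s2) x := by rw [Equiv.Perm.mul_apply]
      rw [← Equiv.Perm.mul_apply, s1_conj_pow, hm, Equiv.Perm.mul_apply, e2,
        ← Equiv.Perm.mul_apply, ← pow_succ]
  have hcl2 : ∀ z, (∃ k : ℕ, z = ((G.s1*G.s2) ^ k) x ∨ z = ((G.s1*G.s2) ^ k) (G.s2 x)) →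
      (∃ k : ℕ, G.s2 z = ((G.s1*G.s2) ^ k) x ∨ G.s2 z = ((G.s1*G.s2) ^ k) (G.s2 x)) := by
    rintro z ⟨k, rfl | rfl⟩
    · obtain ⟨m, hm⟩ := invpow_eq_pow (G.s1*G.s2) k
      refine ⟨m, Or.inr ?_⟩
      rw [← Equiv.Perm.mul_apply, s2_conj_pow, hm, Equiv.Perm.mul_apply]
    · obtain ⟨m, hm⟩ := invpow_eq_pow (G.s1*G.s2) k
      refine ⟨m, Or.inl ?_⟩
      rw [← Equiv.Perm.mul_apply, s2_conj_pow, hm, Equiv.Perm.mul_apply, G.inv2]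
  have hiff : ∀ a b, Relation.EqvGen (permRel {G.s1, G.s2}) a b →
      ((∃ k : ℕ, a = ((G.s1*G.s2) ^ k) x ∨ a = ((G.s1*G.s2) ^ k) (G.s2 x)) ↔
       (∃ k : ℕ, b = ((G.s1*G.s2) ^ k) x ∨ b = ((G.s1*G.s2) ^ k) (G.s2 x))) := by
    intro a b hab
    induction hab with
    | rel u w huw =>
        obtain ⟨g, hg, rfl⟩ := huw
        have hg' : g = G.s1 ∨ g = G.s2 := by simpa using hg
        rcases hg' with rfl | rfl
        · constructor
          · exact hcl1 u
          · intro h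
            have := hcl1 _ h
            rwa [G.inv1] at this
        · constructor
          · exact hcl2 u
          · intro h
            have := hcl2 _ h
            rwa [G.inv2] at this
    | refl u => exact Iff.rfl
    | symm u w _ ih => exact ih.symm
    | trans u v w _ _ ih1 ih2 => exact ih1.trans ih2
  have hyU := (hiff x y hxy).mp ⟨0, Or.inl (by simp)⟩
  obtain ⟨k, hk | hk⟩ := hyU
  · exact ⟨k, hk ▸ hy⟩
  · obtain ⟨m, hm⟩ := invpow_eq_pow (G.s1*G.s2) k
    refine ⟨m, ?_⟩
    have h1 : G.s2 y ∈ S := hS2 y hy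
    have e : G.s2 y = ((G.s1*G.s2) ^ m) x := by
      rw [hk, ← Equiv.Perm.mul_apply, s2_conj_pow, hm, Equiv.Perm.mul_apply, G.inv2]
    rwa [← e]

lemma hasRet_transfer (S : Finset F) (hS2 : ∀ x ∈ S, G.s2 x ∈ S) {a b : F}
    (hab : Relation.EqvGen (permRel {G.s1, G.s2}) a b)
    (ha : ∃ k : ℕ, ((G.s1*G.s2) ^ k) a ∈ S) : ∃ k : ℕ, ((G.s1*G.s2) ^ k) b ∈ S := by
  obtain ⟨k, hk⟩ := ha
  have h1 : Relation.EqvGen (permRel {G.s1, G.s2}) b (((G.s1*G.s2) ^ k) a) :=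
    (eqvGen_equivalence _).trans ((eqvGen_equivalence _).symm hab) (eqvGen_pow_s1s2 G k a)
  exact exists_pow_mem G S hS2 h1 hk

/-- The key first-return identity. -/
lemma star_ret (S : Finset F) (hS2 : ∀ x ∈ S, G.s2 x ∈ S) {x : F}
    (hx : ∃ k : ℕ, ((G.s1*G.s2) ^ k) x ∈ S)
    (hsx : ∃ k : ℕ, ((G.s1*G.s2) ^ k) (G.s1 x) ∈ S) :
    ret (G.s1*G.s2) S (G.s1 (ret (G.s1*G.s2) S (G.s1 x))) = ret (G.s1*G.s2) S x := by
  obtain ⟨m, hmeq, hmS, hmmin⟩ := ret_spec hsx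
  obtain ⟨k, hkeq, hkS, hkmin⟩ := ret_spec hx
  rw [hmeq]
  have e1 : G.s1 (((G.s1*G.s2) ^ m) (G.s1 x)) = (((G.s1*G.s2)⁻¹) ^ m) x := by
    rw [← Equiv.Perm.mul_apply, s1_conj_pow, Equiv.Perm.mul_apply, G.inv1]
  rw [e1, hkeq]
  have hmain : ret (G.s1*G.s2) S ((((G.s1*G.s2)⁻¹) ^ m) x)
      = ((G.s1*G.s2) ^ (m + k)) ((((G.s1*G.s2)⁻¹) ^ m) x) := by
    apply ret_eq_of
    · rw [← Equiv.Perm.mul_apply, pow_mul_invpow_ge _ (by omega)]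
      have h2 : m + k - m = k := by omega
      rw [h2]
      exact hkS
    · intro j hj
      by_cases hjm : j < m
      · rw [← Equiv.Perm.mul_apply, pow_mul_invpow_le _ (le_of_lt hjm)]
        intro hc
        have h2 : G.s2 ((((G.s1*G.s2)⁻¹) ^ (m - j)) x) ∈ S := hS2 _ hc
        have e2 : G.s2 ((((G.s1*G.s2)⁻¹) ^ (m - j)) x)
            = (((G.s1*G.s2)) ^ (m - j - 1)) (G.s1 x) := by
          rw [← Equiv.Perm.mul_apply, s2_mul_invpow G (by omega), Equiv.Perm.mul_apply]
        rw [e2] at h2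
        exact hmmin _ (by omega) h2
      · rw [← Equiv.Perm.mul_apply, pow_mul_invpow_ge _ (by omega)]
        exact hkmin _ (by omega)
  rw [hmain, ← Equiv.Perm.mul_apply, pow_mul_invpow_ge _ (by omega)]
  have h2 : m + k - m = k := by omega
  rw [h2]

lemma indS1fun_involutive (S : Finset F) (hS2 : ∀ x ∈ S, G.s2 x ∈ S) :
    Function.Involutive (indS1fun G S) := by
  intro z
  by_cases hz : z ∈ S
  · have hret_z : ∃ k : ℕ, ((G.s1*G.s2) ^ k) z ∈ S := ⟨0, by simpa using hz⟩
    have hret_sz : ∃ k : ℕ, ((G.s1*G.s2) ^ k) (G.s1 z) ∈ S :=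
      hasRet_transfer G S hS2 (eqvGen_step (by simp) z) hret_z
    have ha : ret (G.s1*G.s2) S (G.s1 z) ∈ S := ret_mem hret_sz
    simp only [indS1fun, if_pos hz, if_pos ha]
    rw [star_ret G S hS2 hret_z hret_sz, ret_of_mem hz]
  · simp only [indS1fun, if_neg hz]

lemma indS1_eq (S : Finset F) (hS2 : ∀ x ∈ S, G.s2 x ∈ S) (z : F) :
    indS1 G S z = indS1fun G S z := indS1_apply (indS1fun_involutive G S hS2) z

lemma indS1_involutive (S : Finset F) (hS2 : ∀ x ∈ S, G.s2 x ∈ S) :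
    Function.Involutive (indS1 G S) := by
  intro z
  rw [indS1_eq G S hS2, indS1_eq G S hS2]
  exact indS1fun_involutive G S hS2 z

lemma core_orbit (S : Finset F) (hS2 : ∀ x ∈ S, G.s2 x ∈ S)
    {gens : Set (Equiv.Perm F)} (hind : indS1 G S ∈ gens) {x : F}
    (hx : ∃ k : ℕ, ((G.s1*G.s2) ^ k) x ∈ S)
    (hsx : ∃ k : ℕ, ((G.s1*G.s2) ^ k) (G.s1 x) ∈ S) :
    orbitOf gens (ret (G.s1*G.s2) S x) = orbitOf gens (ret (G.s1*G.s2) S (G.s1 x)) := by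
  have ha : ret (G.s1*G.s2) S (G.s1 x) ∈ S := ret_mem hsx
  have key : indS1 G S (ret (G.s1*G.s2) S (G.s1 x)) = ret (G.s1*G.s2) S x := by
    rw [indS1_eq G S hS2]
    simp only [indS1fun, if_pos ha]
    exact star_ret G S hS2 hx hsx
  rw [orbitOf_eq_iff]
  have step := eqvGen_step hind (ret (G.s1*G.s2) S (G.s1 x))
  rw [key] at step
  exact (eqvGen_equivalence _).symm step

lemma mix_involutive {u v : Equiv.Perm F} {A : Finset F}
    (h : Function.Involutive (mixFun u v A)) : Function.Involutive (mix u v A) := by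
  intro x
  rw [mix_apply h, mix_apply h]
  exact h x

lemma mix_apply_if {u v : Equiv.Perm F} {A : Finset F}
    (h : Function.Involutive (mixFun u v A)) (x : F) :
    mix u v A x = if x ∈ A then v x else u x := by
  rw [mix_apply h]; rfl

/-- The orbit of the first return point is constant along a vertex. -/
lemma ret_orbit_const (S : Finset F) (hS2 : ∀ x ∈ S, G.s2 x ∈ S)
    {gens : Set (Equiv.Perm F)} (hind : indS1 G S ∈ gens)
    (hmixg : ∀ a ∈ S, Relation.EqvGen (permRel gens) a (G.s2 a))
    {a b : F} (hab : Relation.EqvGen (permRel {G.s1, G.s2}) a b)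
    (ha : ∃ k : ℕ, ((G.s1*G.s2) ^ k) a ∈ S) :
    orbitOf gens (ret (G.s1*G.s2) S a) = orbitOf gens (ret (G.s1*G.s2) S b) := by
  revert ha
  induction hab with
  | rel u w huw =>
      intro hu
      obtain ⟨g, hg, rfl⟩ := huw
      have hg' : g = G.s1 ∨ g = G.s2 := by simpa using hg
      rcases hg' with rfl | rfl
      · exact core_orbit G S hS2 hind hu
          (hasRet_transfer G S hS2 (eqvGen_step (by simp) u) hu)
      · by_cases huS : u ∈ S
        · rw [ret_of_mem huS, ret_of_mem (hS2 u huS), orbitOf_eq_iff]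
          exact hmixg u huS
        · have h2 : G.s2 u ∉ S := fun hc => huS (by rw [← G.inv2 u]; exact hS2 _ hc)
          have hs2ret : ∃ k : ℕ, ((G.s1*G.s2) ^ k) (G.s2 u) ∈ S :=
            hasRet_transfer G S hS2 (eqvGen_step (g := G.s2) (by simp) u) hu
          rw [ret_step h2 hs2ret]
          have e : (G.s1*G.s2) (G.s2 u) = G.s1 u := by
            rw [Equiv.Perm.mul_apply, G.inv2]
          rw [e]
          exact core_orbit G S hS2 hind hu
            (hasRet_transfer G S hS2 (eqvGen_step (by simp) u) hu)
  | refl u => intro _; rfl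
  | symm u w h ih =>
      intro hw
      have hu : ∃ k : ℕ, ((G.s1*G.s2) ^ k) u ∈ S :=
        hasRet_transfer G S hS2 ((eqvGen_equivalence _).symm h) hw
      exact (ih hu).symm
  | trans u v' w h1 h2 ih1 ih2 =>
      intro hu
      have hv : ∃ k : ℕ, ((G.s1*G.s2) ^ k) v' ∈ S := hasRet_transfer G S hS2 h1 hu
      exact (ih1 hu).trans (ih2 hv)

end Aux2


section MainCount

/-- The central counting lemma: for a partition `A ∪ B` of the edges of `G` with a
unique shared vertex, the vertices of the partial dual `G^A` are counted by the
vertices of `G|_B` plus the boundary components of `G|_A`, minus one. -/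
lemma main_count (G : RibbonGraph F) {A B : Finset F}
    (hA : G.IsEdgeSubset A) (hB : G.IsEdgeSubset B)
    (hU : ∀ x, x ∈ G.flags ↔ (x ∈ A ∨ x ∈ B))
    (hd : ∀ x, x ∈ A → x ∈ B → False)
    {v : Set F} (hvV : G.IsVertexOrbit v)
    (hvA : (v ∩ ↑A).Nonempty) (hvB : (v ∩ ↑B).Nonempty)
    (huniq : ∀ w, G.IsVertexOrbit w → (w ∩ ↑A).Nonempty → (w ∩ ↑B).Nonempty → w = v) :
    (orbitOf {G.s1, mix G.s2 G.s0 A} '' ↑G.flags).ncard + 1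
      = (orbitOf {indS1 G B, mix 1 G.s2 B} '' ↑B).ncard
        + (orbitOf {mix 1 G.s0 A, indS1 G A} '' ↑A).ncard := by
  classical
  set R : Set (Equiv.Perm F) := {G.s1, mix G.s2 G.s0 A} with hR
  set Pg : Set (Equiv.Perm F) := {indS1 G B, mix 1 G.s2 B} with hPg
  set Qg : Set (Equiv.Perm F) := {mix 1 G.s0 A, indS1 G A} with hQg
  have hs2A : ∀ x ∈ A, G.s2 x ∈ A := fun x hx => (hA.2 x hx).2
  have hs0A : ∀ x ∈ A, G.s0 x ∈ A := fun x hx => (hA.2 x hx).1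
  have hs2B : ∀ x ∈ B, G.s2 x ∈ B := fun x hx => (hB.2 x hx).2
  have hmixA_inv : Function.Involutive (mixFun G.s2 G.s0 A) :=
    involutive_mixFun G.inv2 G.inv0 (fun x hx => ⟨hs2A x hx, hs0A x hx⟩)
  have hmixA : ∀ x, mix G.s2 G.s0 A x = if x ∈ A then G.s0 x else G.s2 x :=
    mix_apply_if hmixA_inv
  have hmixQ0_inv : Function.Involutive (mixFun 1 G.s0 A) :=
    involutive_mixFun (fun _ => rfl) G.inv0 (fun x hx => ⟨by simpa using hx, hs0A x hx⟩)
  have hmixQ0 : ∀ x, mix 1 G.s0 A x = if x ∈ A then G.s0 x else x := by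
    intro x
    rw [mix_apply_if hmixQ0_inv]
    by_cases hx : x ∈ A <;> simp [hx]
  have hmixP2_inv : Function.Involutive (mixFun 1 G.s2 B) :=
    involutive_mixFun (fun _ => rfl) G.inv2 (fun x hx => ⟨by simpa using hx, hs2B x hx⟩)
  have hmixP2 : ∀ x, mix 1 G.s2 B x = if x ∈ B then G.s2 x else x := by
    intro x
    rw [mix_apply_if hmixP2_inv]
    by_cases hx : x ∈ B <;> simp [hx]
  have hindA : ∀ z, indS1 G A z = indS1fun G A z := indS1_eq G A hs2A
  have hindB : ∀ z, indS1 G B z = indS1fun G B z := indS1_eq G B hs2B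
  have hs1flags : ∀ x ∈ G.flags, G.s1 x ∈ G.flags := fun x hx => perm_mem_of G.fix1 G.inv1 hx
  have hAflags : ∀ x ∈ A, x ∈ G.flags := fun x hx => (hU x).mpr (Or.inl hx)
  have hBflags : ∀ x ∈ B, x ∈ G.flags := fun x hx => (hU x).mpr (Or.inr hx)
  have hnA : ∀ x, x ∉ A → G.s2 x ∉ A := fun x hx hc => hx (by rw [← G.inv2 x]; exact hs2A _ hc)
  have htr : ∀ {a b : F}, Relation.EqvGen (permRel {G.s1, G.s2}) a b →
      (∃ k : ℕ, ((G.s1*G.s2)^k) a ∈ A) → (∃ k : ℕ, ((G.s1*G.s2)^k) b ∈ A) :=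
    fun hab ha => hasRet_transfer G A hs2A hab ha
  let Ψ : F → Set F := fun x =>
    if ∃ k : ℕ, ((G.s1*G.s2)^k) x ∈ A
    then orbitOf Qg (ret (G.s1*G.s2) A x) else orbitOf Pg x
  have hΨpos : ∀ (x : F), (∃ k : ℕ, ((G.s1*G.s2)^k) x ∈ A) →
      Ψ x = orbitOf Qg (ret (G.s1*G.s2) A x) := fun x hx => if_pos hx
  have hΨneg : ∀ (x : F), ¬(∃ k : ℕ, ((G.s1*G.s2)^k) x ∈ A) →
      Ψ x = orbitOf Pg x := fun x hx => if_neg hx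
  -- Invariance of Ψ under the generators of R
  have hstep : ∀ (x : F) (g : Equiv.Perm F), g ∈ R → Ψ (g x) = Ψ x := by
    intro x g hgR
    have hg' : g = G.s1 ∨ g = mix G.s2 G.s0 A := by simpa [hR] using hgR
    by_cases hxf : x ∈ G.flags
    · rcases (hU x).mp hxf with hxA | hxB
      · have hxret : ∃ k : ℕ, ((G.s1*G.s2)^k) x ∈ A := ⟨0, by simpa using hxA⟩
        rcases hg' with rfl | rfl
        · have hs1ret : ∃ k : ℕ, ((G.s1*G.s2)^k) (G.s1 x) ∈ A :=
            htr (eqvGen_step (g := G.s1) (by simp) x) hxret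
          rw [hΨpos _ hs1ret, hΨpos _ hxret, ret_of_mem hxA]
          have e : ret (G.s1*G.s2) A (G.s1 x) = indS1 G A x := by
            rw [hindA, indS1fun, if_pos hxA]
          rw [e, orbitOf_eq_iff]
          exact (eqvGen_equivalence _).symm (eqvGen_step (show indS1 G A ∈ Qg by simp [hQg]) x)
        · have hgx : mix G.s2 G.s0 A x = G.s0 x := by rw [hmixA, if_pos hxA]
          have h0A : G.s0 x ∈ A := hs0A x hxA
          rw [hgx, hΨpos _ ⟨0, by simpa using h0A⟩, hΨpos _ hxret, ret_of_mem h0A,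
            ret_of_mem hxA, orbitOf_eq_iff]
          have hst := eqvGen_step (show mix 1 G.s0 A ∈ Qg by simp [hQg]) x
          rw [show mix 1 G.s0 A x = G.s0 x by rw [hmixQ0, if_pos hxA]] at hst
          exact (eqvGen_equivalence _).symm hst
      · by_cases hxret : ∃ k : ℕ, ((G.s1*G.s2)^k) x ∈ A
        · rcases hg' with rfl | rfl
          · have hs1ret : ∃ k : ℕ, ((G.s1*G.s2)^k) (G.s1 x) ∈ A :=
              htr (eqvGen_step (g := G.s1) (by simp) x) hxret
            rw [hΨpos _ hs1ret, hΨpos _ hxret]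
            exact (core_orbit G A hs2A (show indS1 G A ∈ Qg by simp [hQg]) hxret hs1ret).symm
          · have hxA' : x ∉ A := fun hc => hd x hc hxB
            have hgx : mix G.s2 G.s0 A x = G.s2 x := by rw [hmixA, if_neg hxA']
            have hs2ret : ∃ k : ℕ, ((G.s1*G.s2)^k) (G.s2 x) ∈ A :=
              htr (eqvGen_step (g := G.s2) (by simp) x) hxret
            have hs1ret : ∃ k : ℕ, ((G.s1*G.s2)^k) (G.s1 x) ∈ A :=
              htr (eqvGen_step (g := G.s1) (by simp) x) hxret
            rw [hgx, hΨpos _ hs2ret, hΨpos _ hxret, ret_step (hnA x hxA') hs2ret]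
            rw [show (G.s1*G.s2) (G.s2 x) = G.s1 x by rw [Equiv.Perm.mul_apply, G.inv2]]
            exact (core_orbit G A hs2A (show indS1 G A ∈ Qg by simp [hQg]) hxret hs1ret).symm
        · have hxA' : x ∉ A := fun hc => hxret ⟨0, by simpa using hc⟩
          rcases hg' with rfl | rfl
          · have hs1nret : ¬ ∃ k : ℕ, ((G.s1*G.s2)^k) (G.s1 x) ∈ A := fun hc =>
              hxret (htr ((eqvGen_equivalence _).symm (eqvGen_step (g := G.s1) (by simp) x)) hc)
            have hs1B : G.s1 x ∈ B := by
              rcases (hU _).mp (hs1flags x hxf) with hc | hb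
              · exact absurd ⟨0, by simpa using hc⟩ hs1nret
              · exact hb
            rw [hΨneg _ hs1nret, hΨneg _ hxret, orbitOf_eq_iff]
            have hst := eqvGen_step (show indS1 G B ∈ Pg by simp [hPg]) x
            rw [show indS1 G B x = G.s1 x by
              rw [hindB, indS1fun, if_pos hxB, ret_of_mem hs1B]] at hst
            exact (eqvGen_equivalence _).symm hst
          · have hgx : mix G.s2 G.s0 A x = G.s2 x := by rw [hmixA, if_neg hxA']
            have hs2nret : ¬ ∃ k : ℕ, ((G.s1*G.s2)^k) (G.s2 x) ∈ A := fun hc =>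
              hxret (htr ((eqvGen_equivalence _).symm (eqvGen_step (g := G.s2) (by simp) x)) hc)
            rw [hgx, hΨneg _ hs2nret, hΨneg _ hxret, orbitOf_eq_iff]
            have hst := eqvGen_step (show mix 1 G.s2 B ∈ Pg by simp [hPg]) x
            rw [show mix 1 G.s2 B x = G.s2 x by rw [hmixP2, if_pos hxB]] at hst
            exact (eqvGen_equivalence _).symm hst
    · have hxA' : x ∉ A := fun hc => hxf (hAflags x hc)
      have hgx : g x = x := by
        rcases hg' with rfl | rfl
        · exact G.fix1 x hxf
        · rw [hmixA, if_neg hxA']; exact G.fix2 x hxf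
      rw [hgx]
  have hker1 : ∀ a b, Relation.EqvGen (permRel R) a b → Ψ a = Ψ b := by
    intro a b hab
    induction hab with
    | rel u w huw =>
        obtain ⟨g, hg, rfl⟩ := huw
        exact (hstep u g hg).symm
    | refl u => rfl
    | symm u w _ ih => exact ih.symm
    | trans u v' w _ _ ih1 ih2 => exact ih1.trans ih2
  -- Reaching the first-return point within R
  have hretpath : ∀ z : F, Relation.EqvGen (permRel R) z (ret (G.s1*G.s2) A z) := by
    intro z
    by_cases hz : ∃ k : ℕ, ((G.s1*G.s2)^k) z ∈ A
    · obtain ⟨k, hkeq, hkA, hkmin⟩ := ret_spec hz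
      rw [hkeq]
      have aux : ∀ j : ℕ, j ≤ k → Relation.EqvGen (permRel R) z (((G.s1*G.s2)^j) z) := by
        intro j
        induction j with
        | zero => intro _; simpa using Relation.EqvGen.refl z
        | succ n ih =>
            intro hn
            have h1 := ih (by omega)
            have hnA' : ((G.s1*G.s2)^n) z ∉ A := hkmin n (by omega)
            have step2 := eqvGen_step (show mix G.s2 G.s0 A ∈ R by simp [hR])
              (((G.s1*G.s2)^n) z)
            rw [show mix G.s2 G.s0 A (((G.s1*G.s2)^n) z) = G.s2 (((G.s1*G.s2)^n) z) by
              rw [hmixA, if_neg hnA']] at step2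
            have step1 := eqvGen_step (show G.s1 ∈ R by simp [hR])
              (G.s2 (((G.s1*G.s2)^n) z))
            rw [show ((G.s1*G.s2)^(n+1)) z = G.s1 (G.s2 (((G.s1*G.s2)^n) z)) by
              rw [pow_succ', Equiv.Perm.mul_apply, Equiv.Perm.mul_apply]]
            exact (eqvGen_equivalence _).trans h1 ((eqvGen_equivalence _).trans step2 step1)
      exact aux k le_rfl
    · rw [ret_of_not_exists hz]
      exact Relation.EqvGen.refl z
  have hsimQ : ∀ a b, permRel Qg a b → Relation.EqvGen (permRel R) a b := by
    rintro a b ⟨g, hg, rfl⟩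
    have hg' : g = mix 1 G.s0 A ∨ g = indS1 G A := by simpa [hQg] using hg
    rcases hg' with rfl | rfl
    · by_cases ha : a ∈ A
      · rw [show mix 1 G.s0 A a = mix G.s2 G.s0 A a by
          rw [hmixQ0, hmixA, if_pos ha, if_pos ha]]
        exact eqvGen_step (by simp [hR]) a
      · rw [show mix 1 G.s0 A a = a by rw [hmixQ0, if_neg ha]]
        exact Relation.EqvGen.refl a
    · by_cases ha : a ∈ A
      · rw [hindA, indS1fun, if_pos ha]
        exact (eqvGen_equivalence _).trans (eqvGen_step (show G.s1 ∈ R by simp [hR]) a)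
          (hretpath (G.s1 a))
      · rw [hindA, indS1fun, if_neg ha]
        exact Relation.EqvGen.refl a
  have hPw : ∀ a b, permRel Pg a b → Relation.EqvGen (permRel {G.s1, G.s2}) a b := by
    rintro a b ⟨g, hg, rfl⟩
    have hg' : g = indS1 G B ∨ g = mix 1 G.s2 B := by simpa [hPg] using hg
    rcases hg' with rfl | rfl
    · by_cases ha : a ∈ B
      · rw [hindB, indS1fun, if_pos ha]
        by_cases hr : ∃ k : ℕ, ((G.s1*G.s2)^k) (G.s1 a) ∈ B
        · obtain ⟨k, hkeq, _, _⟩ := ret_spec hr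
          rw [hkeq]
          exact (eqvGen_equivalence _).trans (eqvGen_step (g := G.s1) (by simp) a)
            (eqvGen_pow_s1s2 G k (G.s1 a))
        · rw [ret_of_not_exists hr]
          exact eqvGen_step (by simp) a
      · rw [hindB, indS1fun, if_neg ha]
        exact Relation.EqvGen.refl a
    · by_cases ha : a ∈ B
      · rw [hmixP2, if_pos ha]
        exact eqvGen_step (g := G.s2) (by simp) a
      · rw [hmixP2, if_neg ha]
        exact Relation.EqvGen.refl a
  have hPtrans : ∀ a b, Relation.EqvGen (permRel Pg) a b →
      ((∃ k : ℕ, ((G.s1*G.s2)^k) a ∈ A) ↔ (∃ k : ℕ, ((G.s1*G.s2)^k) b ∈ A)) := by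
    intro a b hab
    have h1 : Relation.EqvGen (permRel {G.s1, G.s2}) a b := eqvGen_lift hPw hab
    exact ⟨htr h1, htr ((eqvGen_equivalence _).symm h1)⟩
  have hsimP : ∀ a b, Relation.EqvGen (permRel Pg) a b →
      (¬ ∃ k : ℕ, ((G.s1*G.s2)^k) a ∈ A) → Relation.EqvGen (permRel R) a b := by
    intro a b hab
    induction hab with
    | rel u w huw =>
        intro hu
        obtain ⟨g, hg, rfl⟩ := huw
        have hg' : g = indS1 G B ∨ g = mix 1 G.s2 B := by simpa [hPg] using hg
        rcases hg' with rfl | rfl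
        · by_cases huB : u ∈ B
          · have hs1nret : ¬ ∃ k : ℕ, ((G.s1*G.s2)^k) (G.s1 u) ∈ A := fun hc =>
              hu (htr ((eqvGen_equivalence _).symm (eqvGen_step (g := G.s1) (by simp) u)) hc)
            have hs1B : G.s1 u ∈ B := by
              rcases (hU _).mp (hs1flags u (hBflags u huB)) with hc | hb
              · exact absurd ⟨0, by simpa using hc⟩ hs1nret
              · exact hb
            rw [show indS1 G B u = G.s1 u by
              rw [hindB, indS1fun, if_pos huB, ret_of_mem hs1B]]
            exact eqvGen_step (by simp [hR]) u
          · rw [hindB, indS1fun, if_neg huB]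
            exact Relation.EqvGen.refl u
        · by_cases huB : u ∈ B
          · have huA : u ∉ A := fun hc => hd u hc huB
            rw [show mix 1 G.s2 B u = mix G.s2 G.s0 A u by
              rw [hmixP2, hmixA, if_pos huB, if_neg huA]]
            exact eqvGen_step (by simp [hR]) u
          · rw [hmixP2, if_neg huB]
            exact Relation.EqvGen.refl u
    | refl u => intro _; exact Relation.EqvGen.refl u
    | symm u w h ih =>
        intro hw
        have hu : ¬ ∃ k : ℕ, ((G.s1*G.s2)^k) u ∈ A := fun hc => hw ((hPtrans u w h).mp hc)
        exact (eqvGen_equivalence _).symm (ih hu)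
    | trans u v' w h1 h2 ih1 ih2 =>
        intro hu
        exact (eqvGen_equivalence _).trans (ih1 hu)
          (ih2 (fun hc => hu ((hPtrans u v' h1).mpr hc)))
  have hQcl : ∀ g ∈ Qg, Function.Involutive g ∧ ∀ z ∈ (↑A : Set F), g z ∈ (↑A : Set F) := by
    intro g hg
    have hg' : g = mix 1 G.s0 A ∨ g = indS1 G A := by simpa [hQg] using hg
    rcases hg' with rfl | rfl
    · refine ⟨mix_involutive hmixQ0_inv, fun z hz => ?_⟩
      have hzA : z ∈ A := hz
      rw [hmixQ0, if_pos hzA]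
      exact Finset.mem_coe.mpr (hs0A z hzA)
    · refine ⟨indS1_involutive G A hs2A, fun z hz => ?_⟩
      have hzA : z ∈ A := hz
      rw [hindA, indS1fun, if_pos hzA]
      exact Finset.mem_coe.mpr
        (ret_mem (htr (eqvGen_step (g := G.s1) (by simp) z) ⟨0, by simpa using hzA⟩))
  have hPcl : ∀ g ∈ Pg, Function.Involutive g ∧ ∀ z ∈ (↑B : Set F), g z ∈ (↑B : Set F) := by
    intro g hg
    have hg' : g = indS1 G B ∨ g = mix 1 G.s2 B := by simpa [hPg] using hg
    rcases hg' with rfl | rfl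
    · refine ⟨indS1_involutive G B hs2B, fun z hz => ?_⟩
      have hzB : z ∈ B := hz
      rw [hindB, indS1fun, if_pos hzB]
      exact Finset.mem_coe.mpr
        (ret_mem (hasRet_transfer G B hs2B (eqvGen_step (g := G.s1) (by simp) z)
          ⟨0, by simpa using hzB⟩))
    · refine ⟨mix_involutive hmixP2_inv, fun z hz => ?_⟩
      have hzB : z ∈ B := hz
      rw [hmixP2, if_pos hzB]
      exact Finset.mem_coe.mpr (hs2B z hzB)
  have hker : ∀ x ∈ (↑G.flags : Set F), ∀ y ∈ (↑G.flags : Set F),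
      (orbitOf R x = orbitOf R y ↔ Ψ x = Ψ y) := by
    intro x hx y hy
    constructor
    · intro h
      exact hker1 x y (orbitOf_eq_iff.mp h)
    · intro h
      rw [orbitOf_eq_iff]
      by_cases hxret : ∃ k : ℕ, ((G.s1*G.s2)^k) x ∈ A
      · have hyret : ∃ k : ℕ, ((G.s1*G.s2)^k) y ∈ A := by
          by_contra hyn
          have hyB : y ∈ B := by
            rcases (hU y).mp (Finset.mem_coe.mp hy) with hc | hb
            · exact absurd ⟨0, by simpa using hc⟩ hyn
            · exact hb
          have h1 : ret (G.s1*G.s2) A x ∈ Ψ x := by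
            rw [hΨpos _ hxret]; exact mem_orbitOf_self _ _
          rw [h, hΨneg _ hyn] at h1
          have h2 : ret (G.s1*G.s2) A x ∈ (↑B : Set F) :=
            orbitOf_subset hPcl (Finset.mem_coe.mpr hyB) h1
          exact hd _ (ret_mem hxret) (Finset.mem_coe.mp h2)
        rw [hΨpos _ hxret, hΨpos _ hyret] at h
        have h4 : Relation.EqvGen (permRel R) (ret (G.s1*G.s2) A x) (ret (G.s1*G.s2) A y) :=
          eqvGen_lift hsimQ (orbitOf_eq_iff.mp h)
        exact (eqvGen_equivalence _).trans (hretpath x)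
          ((eqvGen_equivalence _).trans h4 ((eqvGen_equivalence _).symm (hretpath y)))
      · have hyret : ¬ ∃ k : ℕ, ((G.s1*G.s2)^k) y ∈ A := by
          intro hyr
          have hxB : x ∈ B := by
            rcases (hU x).mp (Finset.mem_coe.mp hx) with hc | hb
            · exact absurd ⟨0, by simpa using hc⟩ hxret
            · exact hb
          have h1 : ret (G.s1*G.s2) A y ∈ Ψ y := by
            rw [hΨpos _ hyr]; exact mem_orbitOf_self _ _
          rw [← h, hΨneg _ hxret] at h1
          have h2 : ret (G.s1*G.s2) A y ∈ (↑B : Set F) :=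
            orbitOf_subset hPcl (Finset.mem_coe.mpr hxB) h1
          exact hd _ (ret_mem hyr) (Finset.mem_coe.mp h2)
        rw [hΨneg _ hxret, hΨneg _ hyret] at h
        exact hsimP x y (orbitOf_eq_iff.mp h) hxret
  have hcount1 : (orbitOf R '' ↑G.flags).ncard = (Ψ '' ↑G.flags).ncard :=
    ncard_image_congr hker
  set NR : Set F := {x : F | x ∈ B ∧ ¬ ∃ k : ℕ, ((G.s1*G.s2)^k) x ∈ A} with hNR
  have himg : Ψ '' ↑G.flags = (orbitOf Qg '' ↑A) ∪ (orbitOf Pg '' NR) := by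
    ext s
    constructor
    · rintro ⟨x, hx, rfl⟩
      by_cases hxret : ∃ k : ℕ, ((G.s1*G.s2)^k) x ∈ A
      · left
        exact ⟨ret (G.s1*G.s2) A x, Finset.mem_coe.mpr (ret_mem hxret), (hΨpos _ hxret).symm⟩
      · right
        have hxB : x ∈ B := by
          rcases (hU x).mp (Finset.mem_coe.mp hx) with hc | hb
          · exact absurd ⟨0, by simpa using hc⟩ hxret
          · exact hb
        exact ⟨x, ⟨hxB, hxret⟩, (hΨneg _ hxret).symm⟩
    · rintro (⟨a, ha, rfl⟩ | ⟨x, hx, rfl⟩)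
      · have haA : a ∈ A := Finset.mem_coe.mp ha
        refine ⟨a, Finset.mem_coe.mpr (hAflags a haA), ?_⟩
        rw [hΨpos _ ⟨0, by simpa using haA⟩, ret_of_mem haA]
      · exact ⟨x, Finset.mem_coe.mpr (hBflags x hx.1), hΨneg _ hx.2⟩
  have hdisj2 : Disjoint (orbitOf Qg '' ↑A) (orbitOf Pg '' NR) := by
    rw [Set.disjoint_left]
    rintro s ⟨a, ha, rfl⟩ ⟨x, hx, hsx⟩
    have h1 : a ∈ orbitOf Qg a := mem_orbitOf_self _ _
    have h2 : orbitOf Pg x ⊆ (↑B : Set F) := orbitOf_subset hPcl (Finset.mem_coe.mpr hx.1)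
    rw [hsx] at h2
    exact hd a (Finset.mem_coe.mp ha) (Finset.mem_coe.mp (h2 h1))
  have hcount2 : (Ψ '' ↑G.flags).ncard
      = (orbitOf Qg '' ↑A).ncard + (orbitOf Pg '' NR).ncard := by
    rw [himg, Set.ncard_union_eq hdisj2 (Set.toFinite _) (Set.toFinite _)]
  obtain ⟨x₀, hx₀v, hx₀B⟩ := hvB
  obtain ⟨y₀, hy₀v, hy₀A⟩ := hvA
  obtain ⟨z₀, hz₀f, hz₀⟩ := hvV
  have hvrel : ∀ w ∈ v, Relation.EqvGen (permRel {G.s1, G.s2}) z₀ w := by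
    intro w hw
    rw [hz₀] at hw
    exact hw
  have hx₀ret : ∃ k : ℕ, ((G.s1*G.s2)^k) x₀ ∈ A := by
    have h1 : Relation.EqvGen (permRel {G.s1, G.s2}) y₀ x₀ :=
      (eqvGen_equivalence _).trans ((eqvGen_equivalence _).symm (hvrel y₀ hy₀v)) (hvrel x₀ hx₀v)
    exact htr h1 ⟨0, by simpa using Finset.mem_coe.mp hy₀A⟩
  have hShconst : ∀ x, x ∈ B → (∃ k : ℕ, ((G.s1*G.s2)^k) x ∈ A) →
      orbitOf Pg x = orbitOf Pg x₀ := by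
    intro x hxB hxret
    obtain ⟨k, hk⟩ := hxret
    have hwV : G.IsVertexOrbit (G.vertexOrbit x) := ⟨x, hBflags x hxB, rfl⟩
    have hmA : (G.vertexOrbit x ∩ ↑A).Nonempty :=
      ⟨((G.s1*G.s2)^k) x, eqvGen_pow_s1s2 G k x, Finset.mem_coe.mpr hk⟩
    have hmB : (G.vertexOrbit x ∩ ↑B).Nonempty :=
      ⟨x, mem_orbitOf_self _ _, Finset.mem_coe.mpr hxB⟩
    have hveq : G.vertexOrbit x = v := huniq _ hwV hmA hmB
    have hx_x₀ : Relation.EqvGen (permRel {G.s1, G.s2}) x x₀ := by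
      have h1 : x₀ ∈ G.vertexOrbit x := by rw [hveq]; exact hx₀v
      exact h1
    have hconst := ret_orbit_const G B hs2B (show indS1 G B ∈ Pg by simp [hPg])
      (fun a haB => by
        have hst := eqvGen_step (show mix 1 G.s2 B ∈ Pg by simp [hPg]) a
        rwa [show mix 1 G.s2 B a = G.s2 a by rw [hmixP2, if_pos haB]] at hst)
      hx_x₀ ⟨0, by simpa using hxB⟩
    rwa [ret_of_mem hxB, ret_of_mem (Finset.mem_coe.mp hx₀B)] at hconst
  have hx₀nNR : orbitOf Pg x₀ ∉ orbitOf Pg '' NR := by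
    rintro ⟨y, hy, hyeq⟩
    exact hy.2 ((hPtrans y x₀ (orbitOf_eq_iff.mp hyeq)).mpr hx₀ret)
  have himgB : orbitOf Pg '' ↑B = insert (orbitOf Pg x₀) (orbitOf Pg '' NR) := by
    ext s
    constructor
    · rintro ⟨x, hx, rfl⟩
      have hxB := Finset.mem_coe.mp hx
      by_cases hxr : ∃ k : ℕ, ((G.s1*G.s2)^k) x ∈ A
      · exact Set.mem_insert_iff.mpr (Or.inl (hShconst x hxB hxr))
      · exact Set.mem_insert_iff.mpr (Or.inr ⟨x, ⟨hxB, hxr⟩, rfl⟩)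
    · intro hs
      rcases Set.mem_insert_iff.mp hs with rfl | ⟨x, hx, rfl⟩
      · exact ⟨x₀, hx₀B, rfl⟩
      · exact ⟨x, Finset.mem_coe.mpr hx.1, rfl⟩
  have hcount3 : (orbitOf Pg '' ↑B).ncard = (orbitOf Pg '' NR).ncard + 1 := by
    rw [himgB, Set.ncard_insert_of_notMem hx₀nNR (Set.toFinite _)]
  rw [hcount1, hcount2, hcount3]
  omega

end MainCount


section Assembly

lemma partialDual_fields (G : RibbonGraph F) {A : Finset F} (hA : G.IsEdgeSubset A) :
    (G.partialDual A).flags = G.flags ∧ (G.partialDual A).fverts = G.fverts ∧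
    (G.partialDual A).s0 = mix G.s0 G.s2 A ∧ (G.partialDual A).s1 = G.s1 ∧
    (G.partialDual A).s2 = mix G.s2 G.s0 A := by
  unfold partialDual
  rw [dif_pos hA]
  exact ⟨rfl, rfl, rfl, rfl, rfl⟩

lemma induce_fields (G : RibbonGraph F) {A : Finset F} (hA : G.IsEdgeSubset A) :
    (G.induce A).flags = A ∧ (G.induce A).fverts = ∅ ∧
    (G.induce A).s0 = mix 1 G.s0 A ∧ (G.induce A).s1 = indS1 G A ∧
    (G.induce A).s2 = mix 1 G.s2 A := by
  unfold induce
  rw [dif_pos hA]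
  exact ⟨rfl, rfl, rfl, rfl, rfl⟩

lemma mix_swap (G : RibbonGraph F) {A B : Finset F} (hA : G.IsEdgeSubset A)
    (hB : G.IsEdgeSubset B) (hU : ∀ x, x ∈ G.flags ↔ (x ∈ A ∨ x ∈ B))
    (hd : ∀ x, x ∈ A → x ∈ B → False) :
    mix G.s0 G.s2 A = mix G.s2 G.s0 B := by
  have hmix1_inv : Function.Involutive (mixFun G.s0 G.s2 A) :=
    involutive_mixFun G.inv0 G.inv2 hA.2
  have hmix2_inv : Function.Involutive (mixFun G.s2 G.s0 B) :=
    involutive_mixFun G.inv2 G.inv0 (fun x hx => ⟨(hB.2 x hx).2, (hB.2 x hx).1⟩)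
  apply Equiv.ext
  intro x
  rw [mix_apply_if hmix1_inv, mix_apply_if hmix2_inv]
  by_cases hxA : x ∈ A
  · rw [if_pos hxA, if_neg (fun hc => hd x hxA hc)]
  · by_cases hxB : x ∈ B
    · rw [if_neg hxA, if_pos hxB]
    · have hxf : x ∉ G.flags := fun hc => by
        rcases (hU x).mp hc with h | h
        exacts [hxA h, hxB h]
      rw [if_neg hxA, if_neg hxB, G.fix0 x hxf, G.fix2 x hxf]

lemma orbit_dual3 (G : RibbonGraph F) {A : Finset F} (hA : G.IsEdgeSubset A) :
    orbitOf {mix G.s0 G.s2 A, G.s1, mix G.s2 G.s0 A} = orbitOf {G.s0, G.s1, G.s2} := by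
  have hmix0 : ∀ x, mix G.s0 G.s2 A x = if x ∈ A then G.s2 x else G.s0 x :=
    mix_apply_if (involutive_mixFun G.inv0 G.inv2 hA.2)
  have hmix2 : ∀ x, mix G.s2 G.s0 A x = if x ∈ A then G.s0 x else G.s2 x :=
    mix_apply_if (involutive_mixFun G.inv2 G.inv0
      (fun x hx => ⟨(hA.2 x hx).2, (hA.2 x hx).1⟩))
  have hrel : ∀ a b, permRel {mix G.s0 G.s2 A, G.s1, mix G.s2 G.s0 A} a b ↔
      permRel {G.s0, G.s1, G.s2} a b := by
    intro a b
    constructor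
    · rintro ⟨g, hg, rfl⟩
      have hg' : g = mix G.s0 G.s2 A ∨ g = G.s1 ∨ g = mix G.s2 G.s0 A := by simpa using hg
      by_cases ha : a ∈ A
      · rcases hg' with rfl | rfl | rfl
        · exact ⟨G.s2, by simp, by rw [hmix0, if_pos ha]⟩
        · exact ⟨G.s1, by simp, rfl⟩
        · exact ⟨G.s0, by simp, by rw [hmix2, if_pos ha]⟩
      · rcases hg' with rfl | rfl | rfl
        · exact ⟨G.s0, by simp, by rw [hmix0, if_neg ha]⟩
        · exact ⟨G.s1, by simp, rfl⟩
        · exact ⟨G.s2, by simp, by rw [hmix2, if_neg ha]⟩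
    · rintro ⟨g, hg, rfl⟩
      have hg' : g = G.s0 ∨ g = G.s1 ∨ g = G.s2 := by simpa using hg
      by_cases ha : a ∈ A
      · rcases hg' with rfl | rfl | rfl
        · exact ⟨mix G.s2 G.s0 A, by simp, by rw [hmix2, if_pos ha]⟩
        · exact ⟨G.s1, by simp, rfl⟩
        · exact ⟨mix G.s0 G.s2 A, by simp, by rw [hmix0, if_pos ha]⟩
      · rcases hg' with rfl | rfl | rfl
        · exact ⟨mix G.s0 G.s2 A, by simp, by rw [hmix0, if_neg ha]⟩
        · exact ⟨G.s1, by simp, rfl⟩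
        · exact ⟨mix G.s2 G.s0 A, by simp, by rw [hmix2, if_neg ha]⟩
  funext x
  ext y
  constructor
  · intro hy
    exact eqvGen_lift (fun a b hab => Relation.EqvGen.rel a b ((hrel a b).mp hab)) hy
  · intro hy
    exact eqvGen_lift (fun a b hab => Relation.EqvGen.rel a b ((hrel a b).mpr hab)) hy

lemma orbit_dual2 (G : RibbonGraph F) {A : Finset F} (hA : G.IsEdgeSubset A) :
    orbitOf {mix G.s0 G.s2 A, mix G.s2 G.s0 A} = orbitOf {G.s0, G.s2} := by
  have hmix0 : ∀ x, mix G.s0 G.s2 A x = if x ∈ A then G.s2 x else G.s0 x :=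
    mix_apply_if (involutive_mixFun G.inv0 G.inv2 hA.2)
  have hmix2 : ∀ x, mix G.s2 G.s0 A x = if x ∈ A then G.s0 x else G.s2 x :=
    mix_apply_if (involutive_mixFun G.inv2 G.inv0
      (fun x hx => ⟨(hA.2 x hx).2, (hA.2 x hx).1⟩))
  have hrel : ∀ a b, permRel {mix G.s0 G.s2 A, mix G.s2 G.s0 A} a b ↔
      permRel {G.s0, G.s2} a b := by
    intro a b
    constructor
    · rintro ⟨g, hg, rfl⟩
      have hg' : g = mix G.s0 G.s2 A ∨ g = mix G.s2 G.s0 A := by simpa using hg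
      by_cases ha : a ∈ A
      · rcases hg' with rfl | rfl
        · exact ⟨G.s2, by simp, by rw [hmix0, if_pos ha]⟩
        · exact ⟨G.s0, by simp, by rw [hmix2, if_pos ha]⟩
      · rcases hg' with rfl | rfl
        · exact ⟨G.s0, by simp, by rw [hmix0, if_neg ha]⟩
        · exact ⟨G.s2, by simp, by rw [hmix2, if_neg ha]⟩
    · rintro ⟨g, hg, rfl⟩
      have hg' : g = G.s0 ∨ g = G.s2 := by simpa using hg
      by_cases ha : a ∈ A
      · rcases hg' with rfl | rfl
        · exact ⟨mix G.s2 G.s0 A, by simp, by rw [hmix2, if_pos ha]⟩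
        · exact ⟨mix G.s0 G.s2 A, by simp, by rw [hmix0, if_pos ha]⟩
      · rcases hg' with rfl | rfl
        · exact ⟨mix G.s0 G.s2 A, by simp, by rw [hmix0, if_neg ha]⟩
        · exact ⟨mix G.s2 G.s0 A, by simp, by rw [hmix2, if_neg ha]⟩
  funext x
  ext y
  constructor
  · intro hy
    exact eqvGen_lift (fun a b hab => Relation.EqvGen.rel a b ((hrel a b).mp hab)) hy
  · intro hy
    exact eqvGen_lift (fun a b hab => Relation.EqvGen.rel a b ((hrel a b).mpr hab)) hy

lemma orbit_side_eq (G : RibbonGraph F) {S : Finset F} (hS : G.IsEdgeSubset S) :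
    ∀ x ∈ S, orbitOf {G.s0, G.s2} x = orbitOf {mix 1 G.s0 S, mix 1 G.s2 S} x := by
  have hmix0 : ∀ x, mix 1 G.s0 S x = if x ∈ S then G.s0 x else x := by
    intro x
    rw [mix_apply_if (involutive_mixFun (fun _ => rfl) G.inv0
      (fun x hx => ⟨by simpa using hx, (hS.2 x hx).1⟩))]
    by_cases hx : x ∈ S <;> simp [hx]
  have hmix2 : ∀ x, mix 1 G.s2 S x = if x ∈ S then G.s2 x else x := by
    intro x
    rw [mix_apply_if (involutive_mixFun (fun _ => rfl) G.inv2
      (fun x hx => ⟨by simpa using hx, (hS.2 x hx).2⟩))]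
    by_cases hx : x ∈ S <;> simp [hx]
  have hcl : ∀ g ∈ ({G.s0, G.s2} : Set (Equiv.Perm F)), Function.Involutive g ∧
      ∀ z ∈ (↑S : Set F), g z ∈ (↑S : Set F) := by
    intro g hg
    have hg' : g = G.s0 ∨ g = G.s2 := by simpa using hg
    rcases hg' with rfl | rfl
    · exact ⟨G.inv0, fun z hz => Finset.mem_coe.mpr ((hS.2 z (Finset.mem_coe.mp hz)).1)⟩
    · exact ⟨G.inv2, fun z hz => Finset.mem_coe.mpr ((hS.2 z (Finset.mem_coe.mp hz)).2)⟩
  intro x hx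
  ext y
  constructor
  · intro hy
    have haux : ∀ a b, Relation.EqvGen (permRel {G.s0, G.s2}) a b → a ∈ S →
        Relation.EqvGen (permRel {mix 1 G.s0 S, mix 1 G.s2 S}) a b := by
      intro a b hab
      induction hab with
      | rel u w huw =>
          intro hu
          obtain ⟨g, hg, rfl⟩ := huw
          have hg' : g = G.s0 ∨ g = G.s2 := by simpa using hg
          rcases hg' with rfl | rfl
          · have hst := eqvGen_step
              (show mix 1 G.s0 S ∈ ({mix 1 G.s0 S, mix 1 G.s2 S} : Set _) by simp) u
            rwa [hmix0, if_pos hu] at hst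
          · have hst := eqvGen_step
              (show mix 1 G.s2 S ∈ ({mix 1 G.s0 S, mix 1 G.s2 S} : Set _) by simp) u
            rwa [hmix2, if_pos hu] at hst
      | refl u => intro _; exact Relation.EqvGen.refl u
      | symm u w hw ih =>
          intro hwS
          have huS : u ∈ S :=
            Finset.mem_coe.mp ((eqvGen_mem_iff hcl hw).mpr (Finset.mem_coe.mpr hwS))
          exact (eqvGen_equivalence _).symm (ih huS)
      | trans u v' w h1 h2 ih1 ih2 =>
          intro huS
          have hvS : v' ∈ S :=
            Finset.mem_coe.mp ((eqvGen_mem_iff hcl h1).mp (Finset.mem_coe.mpr huS))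
          exact (eqvGen_equivalence _).trans (ih1 huS) (ih2 hvS)
    exact haux x y hy hx
  · intro hy
    have haux : ∀ a b, permRel {mix 1 G.s0 S, mix 1 G.s2 S} a b →
        Relation.EqvGen (permRel {G.s0, G.s2}) a b := by
      rintro a b ⟨g, hg, rfl⟩
      have hg' : g = mix 1 G.s0 S ∨ g = mix 1 G.s2 S := by simpa using hg
      rcases hg' with rfl | rfl
      · by_cases ha : a ∈ S
        · have hst := eqvGen_step (show G.s0 ∈ ({G.s0, G.s2} : Set _) by simp) a
          rw [hmix0, if_pos ha]
          exact hst
        · rw [hmix0, if_neg ha]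
          exact Relation.EqvGen.refl a
      · by_cases ha : a ∈ S
        · have hst := eqvGen_step (show G.s2 ∈ ({G.s0, G.s2} : Set _) by simp) a
          rw [hmix2, if_pos ha]
          exact hst
        · rw [hmix2, if_neg ha]
          exact Relation.EqvGen.refl a
    exact eqvGen_lift haux hy

lemma edges_split (G : RibbonGraph F) {A B : Finset F} (hA : G.IsEdgeSubset A)
    (hB : G.IsEdgeSubset B) (hU : ∀ x, x ∈ G.flags ↔ (x ∈ A ∨ x ∈ B))
    (hd : ∀ x, x ∈ A → x ∈ B → False) :
    (orbitOf {G.s0, G.s2} '' ↑G.flags).ncard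
      = (orbitOf {mix 1 G.s0 B, mix 1 G.s2 B} '' ↑B).ncard
        + (orbitOf {mix 1 G.s0 A, mix 1 G.s2 A} '' ↑A).ncard := by
  have hclA : ∀ g ∈ ({G.s0, G.s2} : Set (Equiv.Perm F)), Function.Involutive g ∧
      ∀ z ∈ (↑A : Set F), g z ∈ (↑A : Set F) := by
    intro g hg
    have hg' : g = G.s0 ∨ g = G.s2 := by simpa using hg
    rcases hg' with rfl | rfl
    · exact ⟨G.inv0, fun z hz => Finset.mem_coe.mpr ((hA.2 z (Finset.mem_coe.mp hz)).1)⟩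
    · exact ⟨G.inv2, fun z hz => Finset.mem_coe.mpr ((hA.2 z (Finset.mem_coe.mp hz)).2)⟩
  have hclB : ∀ g ∈ ({G.s0, G.s2} : Set (Equiv.Perm F)), Function.Involutive g ∧
      ∀ z ∈ (↑B : Set F), g z ∈ (↑B : Set F) := by
    intro g hg
    have hg' : g = G.s0 ∨ g = G.s2 := by simpa using hg
    rcases hg' with rfl | rfl
    · exact ⟨G.inv0, fun z hz => Finset.mem_coe.mpr ((hB.2 z (Finset.mem_coe.mp hz)).1)⟩
    · exact ⟨G.inv2, fun z hz => Finset.mem_coe.mpr ((hB.2 z (Finset.mem_coe.mp hz)).2)⟩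
  have hflags : (↑G.flags : Set F) = ↑B ∪ ↑A := by
    ext x
    simp only [Set.mem_union, Finset.mem_coe, hU x]
    tauto
  have himg : orbitOf {G.s0, G.s2} '' ↑G.flags
      = (orbitOf {G.s0, G.s2} '' ↑B) ∪ (orbitOf {G.s0, G.s2} '' ↑A) := by
    rw [hflags, Set.image_union]
  have hdisj : Disjoint ((orbitOf {G.s0, G.s2} '' ↑B)) ((orbitOf {G.s0, G.s2} '' ↑A)) := by
    rw [Set.disjoint_left]
    rintro s ⟨b, hb, rfl⟩ ⟨a, ha, hab⟩
    have h1 : b ∈ orbitOf {G.s0, G.s2} b := mem_orbitOf_self _ _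
    have h2 : orbitOf {G.s0, G.s2} a ⊆ (↑A : Set F) := orbitOf_subset hclA ha
    rw [hab] at h2
    exact hd b (Finset.mem_coe.mp (h2 h1)) (Finset.mem_coe.mp hb)
  rw [himg, Set.ncard_union_eq hdisj (Set.toFinite _) (Set.toFinite _)]
  congr 1
  · exact congrArg Set.ncard (Set.image_congr (fun x hx => orbit_side_eq G hB x (Finset.mem_coe.mp hx)))
  · exact congrArg Set.ncard (Set.image_congr (fun x hx => orbit_side_eq G hA x (Finset.mem_coe.mp hx)))

lemma eqvGen_pow_in (G : RibbonGraph F) {gens : Set (Equiv.Perm F)}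
    (h1 : G.s1 ∈ gens) (h2 : G.s2 ∈ gens) (k : ℕ) (z : F) :
    Relation.EqvGen (permRel gens) z (((G.s1 * G.s2) ^ k) z) := by
  induction k with
  | zero => simpa using Relation.EqvGen.refl z
  | succ n ih =>
      have e1 : ((G.s1 * G.s2) ^ (n+1)) z = G.s1 (G.s2 (((G.s1 * G.s2) ^ n) z)) := by
        rw [pow_succ', Equiv.Perm.mul_apply, Equiv.Perm.mul_apply]
      rw [e1]
      have step2 := eqvGen_step h2 (((G.s1 * G.s2) ^ n) z)
      have step1 := eqvGen_step h1 (G.s2 (((G.s1 * G.s2) ^ n) z))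
      exact (eqvGen_equivalence _).trans ih ((eqvGen_equivalence _).trans step2 step1)

lemma conn_one (G : RibbonGraph F) {A B : Finset F} (hA : G.IsEdgeSubset A)
    (hB : G.IsEdgeSubset B) (hU : ∀ x, x ∈ G.flags ↔ (x ∈ A ∨ x ∈ B))
    (hconnB : (orbitOf {mix 1 G.s0 B, indS1 G B, mix 1 G.s2 B} '' ↑B).ncard = 1)
    (hconnA : (orbitOf {mix 1 G.s0 A, indS1 G A, mix 1 G.s2 A} '' ↑A).ncard = 1)
    {v : Set F} (hvA : (v ∩ ↑A).Nonempty) (hvB : (v ∩ ↑B).Nonempty)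
    (hvV : G.IsVertexOrbit v) :
    (orbitOf {G.s0, G.s1, G.s2} '' ↑G.flags).ncard = 1 := by
  have hs2A : ∀ x ∈ A, G.s2 x ∈ A := fun x hx => (hA.2 x hx).2
  have hs2B : ∀ x ∈ B, G.s2 x ∈ B := fun x hx => (hB.2 x hx).2
  have hlift : ∀ (S : Finset F), G.IsEdgeSubset S → ∀ a b,
      permRel {mix 1 G.s0 S, indS1 G S, mix 1 G.s2 S} a b →
      Relation.EqvGen (permRel {G.s0, G.s1, G.s2}) a b := by
    intro S hS a b hab
    have hS2 : ∀ x ∈ S, G.s2 x ∈ S := fun x hx => (hS.2 x hx).2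
    have hmix0 : ∀ x, mix 1 G.s0 S x = if x ∈ S then G.s0 x else x := by
      intro x
      rw [mix_apply_if (involutive_mixFun (fun _ => rfl) G.inv0
        (fun x hx => ⟨by simpa using hx, (hS.2 x hx).1⟩))]
      by_cases hx : x ∈ S <;> simp [hx]
    have hmix2 : ∀ x, mix 1 G.s2 S x = if x ∈ S then G.s2 x else x := by
      intro x
      rw [mix_apply_if (involutive_mixFun (fun _ => rfl) G.inv2
        (fun x hx => ⟨by simpa using hx, (hS.2 x hx).2⟩))]
      by_cases hx : x ∈ S <;> simp [hx]
    obtain ⟨g, hg, rfl⟩ := hab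
    have hg' : g = mix 1 G.s0 S ∨ g = indS1 G S ∨ g = mix 1 G.s2 S := by simpa using hg
    rcases hg' with rfl | rfl | rfl
    · by_cases ha : a ∈ S
      · have hst := eqvGen_step (show G.s0 ∈ ({G.s0, G.s1, G.s2} : Set _) by simp) a
        rw [hmix0, if_pos ha]
        exact hst
      · rw [hmix0, if_neg ha]
        exact Relation.EqvGen.refl a
    · by_cases ha : a ∈ S
      · rw [indS1_eq G S hS2, indS1fun, if_pos ha]
        by_cases hr : ∃ k : ℕ, ((G.s1*G.s2)^k) (G.s1 a) ∈ S
        · obtain ⟨k, hkeq, _, _⟩ := ret_spec hr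
          rw [hkeq]
          exact (eqvGen_equivalence _).trans
            (eqvGen_step (show G.s1 ∈ ({G.s0, G.s1, G.s2} : Set _) by simp) a)
            (eqvGen_pow_in G (by simp) (by simp) k (G.s1 a))
        · rw [ret_of_not_exists hr]
          exact eqvGen_step (by simp) a
      · rw [indS1_eq G S hS2, indS1fun, if_neg ha]
        exact Relation.EqvGen.refl a
    · by_cases ha : a ∈ S
      · have hst := eqvGen_step (show G.s2 ∈ ({G.s0, G.s1, G.s2} : Set _) by simp) a
        rw [hmix2, if_pos ha]
        exact hst
      · rw [hmix2, if_neg ha]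
        exact Relation.EqvGen.refl a
  have hsideB : ∀ x ∈ B, ∀ y ∈ B, Relation.EqvGen (permRel {G.s0, G.s1, G.s2}) x y := by
    intro x hx y hy
    obtain ⟨t, ht⟩ := Set.ncard_eq_one.mp hconnB
    have h1 : orbitOf {mix 1 G.s0 B, indS1 G B, mix 1 G.s2 B} x = t := by
      have : orbitOf {mix 1 G.s0 B, indS1 G B, mix 1 G.s2 B} x ∈
          orbitOf {mix 1 G.s0 B, indS1 G B, mix 1 G.s2 B} '' ↑B :=
        ⟨x, Finset.mem_coe.mpr hx, rfl⟩
      rw [ht] at this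
      exact this
    have h2 : orbitOf {mix 1 G.s0 B, indS1 G B, mix 1 G.s2 B} y = t := by
      have : orbitOf {mix 1 G.s0 B, indS1 G B, mix 1 G.s2 B} y ∈
          orbitOf {mix 1 G.s0 B, indS1 G B, mix 1 G.s2 B} '' ↑B :=
        ⟨y, Finset.mem_coe.mpr hy, rfl⟩
      rw [ht] at this
      exact this
    have h3 := orbitOf_eq_iff.mp (h1.trans h2.symm)
    exact eqvGen_lift (hlift B hB) h3
  have hsideA : ∀ x ∈ A, ∀ y ∈ A, Relation.EqvGen (permRel {G.s0, G.s1, G.s2}) x y := by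
    intro x hx y hy
    obtain ⟨t, ht⟩ := Set.ncard_eq_one.mp hconnA
    have h1 : orbitOf {mix 1 G.s0 A, indS1 G A, mix 1 G.s2 A} x = t := by
      have : orbitOf {mix 1 G.s0 A, indS1 G A, mix 1 G.s2 A} x ∈
          orbitOf {mix 1 G.s0 A, indS1 G A, mix 1 G.s2 A} '' ↑A :=
        ⟨x, Finset.mem_coe.mpr hx, rfl⟩
      rw [ht] at this
      exact this
    have h2 : orbitOf {mix 1 G.s0 A, indS1 G A, mix 1 G.s2 A} y = t := by
      have : orbitOf {mix 1 G.s0 A, indS1 G A, mix 1 G.s2 A} y ∈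
          orbitOf {mix 1 G.s0 A, indS1 G A, mix 1 G.s2 A} '' ↑A :=
        ⟨y, Finset.mem_coe.mpr hy, rfl⟩
      rw [ht] at this
      exact this
    have h3 := orbitOf_eq_iff.mp (h1.trans h2.symm)
    exact eqvGen_lift (hlift A hA) h3
  obtain ⟨x₀, hx₀v, hx₀B⟩ := hvB
  obtain ⟨y₀, hy₀v, hy₀A⟩ := hvA
  obtain ⟨z₀, hz₀f, hz₀⟩ := hvV
  have hbridge : Relation.EqvGen (permRel {G.s0, G.s1, G.s2}) x₀ y₀ := by
    have h1 : Relation.EqvGen (permRel {G.s1, G.s2}) z₀ x₀ := by rw [hz₀] at hx₀v; exact hx₀v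
    have h2 : Relation.EqvGen (permRel {G.s1, G.s2}) z₀ y₀ := by rw [hz₀] at hy₀v; exact hy₀v
    have h3 : Relation.EqvGen (permRel {G.s1, G.s2}) x₀ y₀ :=
      (eqvGen_equivalence _).trans ((eqvGen_equivalence _).symm h1) h2
    refine eqvGen_lift ?_ h3
    rintro a b ⟨g, hg, rfl⟩
    have hg' : g = G.s1 ∨ g = G.s2 := by simpa using hg
    rcases hg' with rfl | rfl
    · exact eqvGen_step (by simp) a
    · exact eqvGen_step (by simp) a
  have hall : ∀ x ∈ G.flags, Relation.EqvGen (permRel {G.s0, G.s1, G.s2}) x x₀ := by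
    intro x hx
    rcases (hU x).mp hx with hxA | hxB'
    · exact (eqvGen_equivalence _).trans (hsideA x hxA y₀ (Finset.mem_coe.mp hy₀A))
        ((eqvGen_equivalence _).symm hbridge)
    · exact hsideB x hxB' x₀ (Finset.mem_coe.mp hx₀B)
  have himg : orbitOf {G.s0, G.s1, G.s2} '' ↑G.flags = {orbitOf {G.s0, G.s1, G.s2} x₀} := by
    ext s
    constructor
    · rintro ⟨x, hx, rfl⟩
      exact orbitOf_eq_iff.mpr (hall x (Finset.mem_coe.mp hx))
    · rintro rfl
      exact ⟨x₀, Finset.mem_coe.mpr ((hU x₀).mpr (Or.inr (Finset.mem_coe.mp hx₀B))),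
        rfl⟩
  rw [himg, Set.ncard_singleton]

end Assembly

/-- For a 1-sum `G = P ⊕ Q`, the Euler genus of the partial
dual is additive: `γ(G^{E(Q)}) = γ(G^{E(P)}) = γ(P) + γ(Q)`. -/
theorem eulerGenus_partialDual_oneSum (G P Q : RibbonGraph F)
    (h : IsNSum G P Q 1) :
    (G.partialDual Q.flags).eulerGenus = (G.partialDual P.flags).eulerGenus ∧
    (G.partialDual Q.flags).eulerGenus = P.eulerGenus + Q.eulerGenus := by
  obtain ⟨⟨hBE, hPeq⟩, ⟨hAE, hQeq⟩, hPc, hQc, hPne, hQne, hUn, hInt, hSh⟩ := h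
  set A := Q.flags with hAdef
  set B := P.flags with hBdef
  obtain ⟨v, hv⟩ := Set.ncard_eq_one.mp hSh
  have hvmem : v ∈ G.sharedVerts P Q := by rw [hv]; exact Set.mem_singleton v
  obtain ⟨hvV, hvB, hvA⟩ := hvmem
  have huniqA : ∀ w, G.IsVertexOrbit w → (w ∩ ↑A).Nonempty → (w ∩ ↑B).Nonempty → w = v := by
    intro w h1 h2 h3
    have hmem : w ∈ G.sharedVerts P Q := ⟨h1, h3, h2⟩
    rw [hv] at hmem
    exact hmem
  have huniqB : ∀ w, G.IsVertexOrbit w → (w ∩ ↑B).Nonempty → (w ∩ ↑A).Nonempty → w = v :=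
    fun w h1 h2 h3 => huniqA w h1 h3 h2
  have hU : ∀ x, x ∈ G.flags ↔ (x ∈ A ∨ x ∈ B) := by
    intro x
    rw [← hUn]
    simp only [Finset.mem_union]
    tauto
  have hU' : ∀ x, x ∈ G.flags ↔ (x ∈ B ∨ x ∈ A) := by
    intro x
    rw [hU x]
    tauto
  have hd : ∀ x, x ∈ A → x ∈ B → False := by
    intro x h1 h2
    have hmem : x ∈ B ∩ A := Finset.mem_inter.mpr ⟨h2, h1⟩
    rw [hInt] at hmem
    exact absurd hmem (Finset.notMem_empty x)
  have hd' : ∀ x, x ∈ B → x ∈ A → False := fun x h1 h2 => hd x h2 h1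
  obtain ⟨hPf, hPfv, hPs0, hPs1, hPs2⟩ := induce_fields G hBE
  obtain ⟨hQf, hQfv, hQs0, hQs1, hQs2⟩ := induce_fields G hAE
  obtain ⟨hDf, hDfv, hDs0, hDs1, hDs2⟩ := partialDual_fields G hAE
  obtain ⟨hD'f, hD'fv, hD's0, hD's1, hD's2⟩ := partialDual_fields G hBE
  have hPV : P.numVertices = (orbitOf {indS1 G B, mix 1 G.s2 B} '' ↑B).ncard := by
    rw [hPeq]
    unfold numVertices countOrbits
    rw [hPs1, hPs2, hPf, hPfv]
    simp
  have hPb : P.numBoundary = (orbitOf {mix 1 G.s0 B, indS1 G B} '' ↑B).ncard := by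
    rw [hPeq]
    unfold numBoundary countOrbits
    rw [hPs0, hPs1, hPf, hPfv]
    simp
  have hPE : P.numEdges = (orbitOf {mix 1 G.s0 B, mix 1 G.s2 B} '' ↑B).ncard := by
    rw [hPeq]
    unfold numEdges countOrbits
    rw [hPs0, hPs2, hPf]
  have hPcc : (orbitOf {mix 1 G.s0 B, indS1 G B, mix 1 G.s2 B} '' ↑B).ncard = 1 := by
    have h1 : P.numComponents = 1 := hPc
    rw [hPeq] at h1
    unfold numComponents countOrbits at h1
    rw [hPs0, hPs1, hPs2, hPf, hPfv] at h1
    simpa using h1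
  have hQV : Q.numVertices = (orbitOf {indS1 G A, mix 1 G.s2 A} '' ↑A).ncard := by
    rw [hQeq]
    unfold numVertices countOrbits
    rw [hQs1, hQs2, hQf, hQfv]
    simp
  have hQb : Q.numBoundary = (orbitOf {mix 1 G.s0 A, indS1 G A} '' ↑A).ncard := by
    rw [hQeq]
    unfold numBoundary countOrbits
    rw [hQs0, hQs1, hQf, hQfv]
    simp
  have hQE : Q.numEdges = (orbitOf {mix 1 G.s0 A, mix 1 G.s2 A} '' ↑A).ncard := by
    rw [hQeq]
    unfold numEdges countOrbits
    rw [hQs0, hQs2, hQf]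
  have hQcc : (orbitOf {mix 1 G.s0 A, indS1 G A, mix 1 G.s2 A} '' ↑A).ncard = 1 := by
    have h1 : Q.numComponents = 1 := hQc
    rw [hQeq] at h1
    unfold numComponents countOrbits at h1
    rw [hQs0, hQs1, hQs2, hQf, hQfv] at h1
    simpa using h1
  have hX := main_count G hAE hBE hU hd hvV hvA hvB huniqA
  have hY := main_count G hBE hAE hU' hd' hvV hvB hvA huniqB
  have hE := edges_split G hAE hBE hU hd
  have hC := conn_one G hAE hBE hU hPcc hQcc hvA hvB hvV
  have hDV : (G.partialDual A).numVertices
      = (orbitOf {G.s1, mix G.s2 G.s0 A} '' ↑G.flags).ncard + G.fverts.card := by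
    unfold numVertices countOrbits
    rw [hDs1, hDs2, hDf, hDfv]
  have hDb : (G.partialDual A).numBoundary
      = (orbitOf {G.s1, mix G.s2 G.s0 B} '' ↑G.flags).ncard + G.fverts.card := by
    unfold numBoundary countOrbits
    rw [hDs0, hDs1, hDf, hDfv, mix_swap G hAE hBE hU hd, Set.pair_comm]
  have hDE : (G.partialDual A).numEdges = (orbitOf {G.s0, G.s2} '' ↑G.flags).ncard := by
    unfold numEdges countOrbits
    rw [hDs0, hDs2, hDf, orbit_dual2 G hAE]
  have hDc : (G.partialDual A).numComponents = 1 + G.fverts.card := by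
    unfold numComponents countOrbits
    rw [hDs0, hDs1, hDs2, hDf, hDfv, orbit_dual3 G hAE, hC]
  have hD'V : (G.partialDual B).numVertices
      = (orbitOf {G.s1, mix G.s2 G.s0 B} '' ↑G.flags).ncard + G.fverts.card := by
    unfold numVertices countOrbits
    rw [hD's1, hD's2, hD'f, hD'fv]
  have hD'b : (G.partialDual B).numBoundary
      = (orbitOf {G.s1, mix G.s2 G.s0 A} '' ↑G.flags).ncard + G.fverts.card := by
    unfold numBoundary countOrbits
    rw [hD's0, hD's1, hD'f, hD'fv, mix_swap G hBE hAE hU' hd', Set.pair_comm]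
  have hD'E : (G.partialDual B).numEdges = (orbitOf {G.s0, G.s2} '' ↑G.flags).ncard := by
    unfold numEdges countOrbits
    rw [hD's0, hD's2, hD'f, orbit_dual2 G hBE]
  have hD'c : (G.partialDual B).numComponents = 1 + G.fverts.card := by
    unfold numComponents countOrbits
    rw [hD's0, hD's1, hD's2, hD'f, hD'fv, orbit_dual3 G hBE, hC]
  have hPc1 : P.numComponents = 1 := hPc
  have hQc1 : Q.numComponents = 1 := hQc
  unfold eulerGenus eulerChar
  rw [hDV, hDb, hDE, hDc, hD'V, hD'b, hD'E, hD'c, hPV, hPb, hPE, hQV, hQb, hQE, hPc1, hQc1]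
  push_cast
  constructor
  · omega
  · omega

end RibbonGraph

end RibbonPaper
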